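/- arXiv:2305.12041 — 8 statements merged into one kernel-verified Lean document; each statement's English description precedes it below -/
import Mathlib

section
/- Let r ≥ 9 be an integer. Suppose that every finite simple graph H satisfying the semi-planar edge bounds with maximum degree at most r and with |V(H)| divisible by r admits an equitable r-coloring. Then every finite simple graph G satisfying the semi-planar edge bounds with maximum degree at most r admits an equitable r-coloring. (This is Lemma 2.2 of the paper for the semi-planar case.) -/
open scoped Classical

namespace Equitable

variable {V : Type*}

/-- An equitable `r`-coloring of `G`: a proper coloring with `r` colors whose
color classes pairwise differ in size by at most `1`. -/
def IsEquitableColoring [Fintype V] (G : SimpleGraph V) (r : ℕ) (c : V → Fin r) : Prop :=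
  (∀ u v : V, G.Adj u v → c u ≠ c v) ∧
  ∀ i j : Fin r,
    (Finset.univ.filter fun v => c v = i).card ≤
      (Finset.univ.filter fun v => c v = j).card + 1

/-- The number of edges of `G` with both endpoints in `S`. -/
noncomputable def edgesWithin [Fintype V] (G : SimpleGraph V) (S : Finset V) : ℕ :=
  (G.edgeFinset.filter fun e => ∀ v ∈ e, v ∈ S).card

/-- The number of edges of `G` with one endpoint in `X` and the other in `Y`. -/
noncomputable def edgesBetween [Fintype V] (G : SimpleGraph V) (X Y : Finset V) : ℕ :=
  (G.edgeFinset.filter fun e => ∃ u ∈ X, ∃ w ∈ Y, e = s(u, w)).card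

/-- The semi-planar edge bounds. -/
def SemiPlanarBounds [Fintype V] (G : SimpleGraph V) : Prop :=
  (∀ S : Finset V, edgesWithin G S ≤ 3 * S.card) ∧
  ∀ X Y : Finset V, Disjoint X Y → edgesBetween G X Y ≤ 2 * (X.card + Y.card)

/-- The planar edge bounds. -/
def PlanarBounds [Fintype V] (G : SimpleGraph V) : Prop :=
  (∀ S : Finset V, 3 ≤ S.card → edgesWithin G S ≤ 3 * S.card - 6) ∧
  ∀ X Y : Finset V, Disjoint X Y → 3 ≤ X.card + Y.card →
    edgesBetween G X Y ≤ 2 * (X.card + Y.card) - 4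

/-- The semi-planar bipartite edge bound. -/
def SemiPlanarBipBound [Fintype V] (G : SimpleGraph V) : Prop :=
  ∀ X Y : Finset V, Disjoint X Y → edgesBetween G X Y ≤ 2 * (X.card + Y.card)

/-- The planar bipartite edge bound. -/
def PlanarBipBound [Fintype V] (G : SimpleGraph V) : Prop :=
  ∀ X Y : Finset V, Disjoint X Y → 3 ≤ X.card + Y.card →
    edgesBetween G X Y ≤ 2 * (X.card + Y.card) - 4

/-- `P` is an almost equitable coloring of `G − x`: a partition of `V(G) \ {x}` into `r`
independent sets, the small class `P 0` of size `s − 1` and the other classes of size `s`. -/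
def AEColoring [Fintype V] (G : SimpleGraph V) (x : V) {r : ℕ} [NeZero r] (s : ℕ)
    (P : Fin r → Finset V) : Prop :=
  (∀ i j : Fin r, i ≠ j → Disjoint (P i) (P j)) ∧
  (∀ v : V, (∃ i, v ∈ P i) ↔ v ≠ x) ∧
  (∀ i : Fin r, ∀ u ∈ P i, ∀ w ∈ P i, ¬ G.Adj u w) ∧
  (P 0).card = s - 1 ∧
  ∀ i : Fin r, i ≠ 0 → (P i).card = s

/-- The arc relation of the auxiliary digraph `H`: an arc from class `i` to class `j`
iff `i ≠ j` and some vertex of `P i` has no `G`-neighbor in `P j` (such a vertex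
is a witness of the arc and is called movable to `P j`). -/
def Arc (G : SimpleGraph V) {r : ℕ} (P : Fin r → Finset V) (i j : Fin r) : Prop :=
  i ≠ j ∧ ∃ v ∈ P i, ∀ u ∈ P j, ¬ G.Adj v u

/-- A class is accessible if the auxiliary digraph has a directed path (possibly of
length `0`) from it to the small class `P 0`. -/
def Accessible (G : SimpleGraph V) {r : ℕ} [NeZero r] (P : Fin r → Finset V)
    (i : Fin r) : Prop :=
  Relation.ReflTransGen (Arc G P) i 0

/-- The number of accessible classes. -/
noncomputable def accCount (G : SimpleGraph V) {r : ℕ} [NeZero r]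
    (P : Fin r → Finset V) : ℕ :=
  (Finset.univ.filter fun i => Accessible G P i).card

/-- No almost equitable coloring of `G − x` has more accessible classes than `P`. -/
def MaxAccessible [Fintype V] (G : SimpleGraph V) (x : V) {r : ℕ} [NeZero r] (s : ℕ)
    (P : Fin r → Finset V) : Prop :=
  ∀ P' : Fin r → Finset V, AEColoring G x s P' → accCount G P' ≤ accCount G P

/-- Class `i` blocks class `j` if `i ≠ j` and the auxiliary digraph minus the
class `i` has no directed path from `j` to the small class `P 0`. -/
def Blocks (G : SimpleGraph V) {r : ℕ} [NeZero r] (P : Fin r → Finset V)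
    (i j : Fin r) : Prop :=
  i ≠ j ∧ ¬ Relation.ReflTransGen (fun p q => Arc G P p q ∧ p ≠ i ∧ q ≠ i) j 0

/-- An accessible class is terminal if it blocks no accessible class. -/
def Terminal (G : SimpleGraph V) {r : ℕ} [NeZero r] (P : Fin r → Finset V)
    (i : Fin r) : Prop :=
  Accessible G P i ∧ ∀ j : Fin r, Accessible G P j → ¬ Blocks G P i j

/-- `u` is a solo neighbor of `v` (where `v` lies in the accessible class `P i`):
`u` lies in a non-accessible class, is adjacent to `v`, and `v` is the unique
neighbor of `u` in `P i`.  `Q(v)` is the set of such `u`. -/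
def SoloNbr (G : SimpleGraph V) {r : ℕ} [NeZero r] (P : Fin r → Finset V)
    (i : Fin r) (v u : V) : Prop :=
  (∃ k : Fin r, ¬ Accessible G P k ∧ u ∈ P k) ∧ G.Adj v u ∧
    ∀ w ∈ P i, G.Adj u w → w = v

/-- `u ∈ Q'(v)`: `u` is a solo neighbor of `v` that is non-adjacent to some other
solo neighbor of `v`. -/
def InQ' (G : SimpleGraph V) {r : ℕ} [NeZero r] (P : Fin r → Finset V)
    (i : Fin r) (v u : V) : Prop :=
  SoloNbr G P i v u ∧ ∃ u' : V, SoloNbr G P i v u' ∧ u' ≠ u ∧ ¬ G.Adj u u'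

/-- A vertex `v` of a terminal accessible class `P i` is ordinary if some other vertex of
`P i` is movable to another accessible class, or there are at most two accessible classes. -/
def Ordinary (G : SimpleGraph V) {r : ℕ} [NeZero r] (P : Fin r → Finset V)
    (i : Fin r) (v : V) : Prop :=
  (∃ v' ∈ P i, v' ≠ v ∧
    ∃ j : Fin r, j ≠ i ∧ Accessible G P j ∧ ∀ w ∈ P j, ¬ G.Adj v' w) ∨
  accCount G P ≤ 2

/-- The strong component of the auxiliary digraph containing class `i`. -/
noncomputable def strongComp (G : SimpleGraph V) {r : ℕ} (P : Fin r → Finset V)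
    (i : Fin r) : Finset (Fin r) :=
  Finset.univ.filter fun j =>
    Relation.ReflTransGen (Arc G P) i j ∧ Relation.ReflTransGen (Arc G P) j i

/-!
Write `n = |V|` and `t = n % r`. If `t + 6 ≤ r`, induct on `t`: a graph with the semi-planar
bounds has a vertex `v` of degree at most `6`; an equitable coloring of `G - v` has
`r - (t - 1) ≥ 7` classes of the smaller size `⌊(n - 1) / r⌋`, so `v` can join one of them that
contains none of its neighbours. Otherwise `d = r - t ≤ 5`; adding a disjoint clique `K_d`
preserves the bounds (every graph on at most `7` vertices satisfies them) and makes the number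
of vertices divisible by `r`. In an equitable coloring of `G ⊕ K_d` all classes then have the
same size, and the clique vertices lie in distinct classes, so deleting them leaves an
equitable coloring of `G`.
-/

open Finset

theorem _root_.Finset.EquitableOn.card_filter_eq_average {α : Type*} {s : Finset α} {f : α → ℕ}
    (h : Set.EquitableOn (s : Set α) f) :
    #{a ∈ s | f a = (∑ i ∈ s, f i) / #s} = #s - (∑ i ∈ s, f i) % #s := by
  set q := (∑ i ∈ s, f i) / #s
  have hlarge : ∀ a ∈ s.filter (fun a => ¬ f a = q), f a = q + 1 := fun a ha => by
    rw [mem_filter] at ha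
    exact (Finset.equitableOn_iff.1 h a ha.1).resolve_left ha.2
  have hsum := sum_filter_add_sum_filter_not s (fun a => f a = q) f
  rw [sum_const_nat (fun a ha => (mem_filter.1 ha).2), sum_const_nat hlarge] at hsum
  have hcard := card_filter_add_card_filter_not (s := s) (fun a => f a = q)
  have hdiv : #s * q + (∑ i ∈ s, f i) % #s = ∑ i ∈ s, f i := Nat.div_add_mod _ _
  have hq := congrArg (· * q) hcard
  simp only [add_mul] at hq
  have : #{a ∈ s | ¬ f a = q} = (∑ i ∈ s, f i) % #s := by linarith
  omega

variable {W : Type*}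

lemma card_le_of_subset_edgeFinset_sum {G : SimpleGraph V} {H : SimpleGraph W}
    [Fintype G.edgeSet] [Fintype H.edgeSet] [Fintype (G ⊕g H).edgeSet]
    {F : Finset (Sym2 (V ⊕ W))} (hF : F ⊆ (G ⊕g H).edgeFinset) :
    #F ≤ #{e ∈ G.edgeFinset | e.map Sum.inl ∈ F} + #{e ∈ H.edgeFinset | e.map Sum.inr ∈ F} := by
  refine (card_le_card (t := {e ∈ G.edgeFinset | e.map Sum.inl ∈ F}.image (Sym2.map Sum.inl) ∪
      {e ∈ H.edgeFinset | e.map Sum.inr ∈ F}.image (Sym2.map Sum.inr)) fun e he => ?_).trans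
    ((card_union_le _ _).trans (add_le_add card_image_le card_image_le))
  have hadj := SimpleGraph.mem_edgeFinset.1 (hF he)
  induction e using Sym2.ind with | _ a b =>
  rcases a with a | a <;> rcases b with b | b <;>
    simp only [SimpleGraph.mem_edgeSet, SimpleGraph.sum_adj] at hadj
  · exact mem_union_left _ (mem_image.2 ⟨s(a, b), by simpa using ⟨hadj, he⟩, rfl⟩)
  · exact mem_union_right _ (mem_image.2 ⟨s(a, b), by simpa using ⟨hadj, he⟩, rfl⟩)

lemma degree_sum_inl (G : SimpleGraph V) (H : SimpleGraph W) (v : V)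
    [Fintype ((G ⊕g H).neighborSet (.inl v))] [Fintype (G.neighborSet v)] :
    (G ⊕g H).degree (.inl v) = G.degree v := by
  rw [← SimpleGraph.card_neighborSet_eq_degree, ← SimpleGraph.card_neighborSet_eq_degree]
  simp only [SimpleGraph.neighborSet_sum_inl]
  exact Set.card_image_of_injective _ Sum.inl_injective

lemma degree_sum_inr (G : SimpleGraph V) (H : SimpleGraph W) (w : W)
    [Fintype ((G ⊕g H).neighborSet (.inr w))] [Fintype (H.neighborSet w)] :
    (G ⊕g H).degree (.inr w) = H.degree w := by
  rw [← SimpleGraph.card_neighborSet_eq_degree, ← SimpleGraph.card_neighborSet_eq_degree]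
  simp only [SimpleGraph.neighborSet_sum_inr]
  exact Set.card_image_of_injective _ Sum.inr_injective

section EdgeCounts

variable [Fintype V] [Fintype W]

-- The definitions use the classical `DecidableEq` instance; these restatements accept any, so
-- that they can be rewritten on `V ⊕ W`, where instance search finds another one.
lemma edgesWithin_eq_card_filter [DecidableEq V] (G : SimpleGraph V) (S : Finset V) :
    edgesWithin G S = #{e ∈ G.edgeFinset | ∀ v ∈ e, v ∈ S} := by
  unfold edgesWithin
  convert rfl

lemma edgesBetween_eq_card_filter [DecidableEq V] (G : SimpleGraph V) (X Y : Finset V) :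
    edgesBetween G X Y = #{e ∈ G.edgeFinset | ∃ u ∈ X, ∃ w ∈ Y, e = s(u, w)} := by
  unfold edgesBetween
  convert rfl

lemma edgesWithin_le_of_copy {H : SimpleGraph W} {G : SimpleGraph V} (f : H.Copy G)
    (S : Finset W) : edgesWithin H S ≤ edgesWithin G (S.map f.toEmbedding) := by
  refine card_le_card_of_injOn (Sym2.map f) (fun e he => ?_) (Sym2.map.injective f.injective).injOn
  induction e using Sym2.ind with | _ a b =>
  simp only [coe_filter, Set.mem_ofPred_eq, SimpleGraph.mem_edgeFinset, SimpleGraph.mem_edgeSet,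
    Sym2.map_mk, Sym2.mem_iff, forall_eq_or_imp, forall_eq] at he ⊢
  exact ⟨f.toHom.map_adj he.1, mem_map_of_mem _ he.2.1, mem_map_of_mem _ he.2.2⟩

lemma edgesBetween_le_of_copy {H : SimpleGraph W} {G : SimpleGraph V} (f : H.Copy G)
    (X Y : Finset W) :
    edgesBetween H X Y ≤ edgesBetween G (X.map f.toEmbedding) (Y.map f.toEmbedding) := by
  refine card_le_card_of_injOn (Sym2.map f) (fun e he => ?_) (Sym2.map.injective f.injective).injOn
  simp only [coe_filter, Set.mem_ofPred_eq, SimpleGraph.mem_edgeFinset] at he ⊢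
  obtain ⟨hadj, u, hu, w, hw, rfl⟩ := he
  exact ⟨f.toHom.map_adj hadj, f u, mem_map_of_mem _ hu, f w, mem_map_of_mem _ hw,
    Sym2.map_mk _ _ _⟩

lemma SemiPlanarBounds.of_copy {H : SimpleGraph W} {G : SimpleGraph V} (hG : SemiPlanarBounds G)
    (f : H.Copy G) : SemiPlanarBounds H := by
  refine ⟨fun S => ?_, fun X Y hXY => ?_⟩
  · simpa using (edgesWithin_le_of_copy f S).trans (hG.1 _)
  · simpa using (edgesBetween_le_of_copy f X Y).trans
      (hG.2 _ _ ((disjoint_map f.toEmbedding).2 hXY))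

lemma edgesWithin_le_choose_two (G : SimpleGraph V) (S : Finset V) :
    edgesWithin G S ≤ (#S).choose 2 := by
  rw [← Sym2.card_image_offDiag]
  refine card_le_card fun e he => ?_
  induction e using Sym2.ind with | _ a b =>
  simp only [mem_filter, SimpleGraph.mem_edgeFinset, SimpleGraph.mem_edgeSet, Sym2.mem_iff,
    forall_eq_or_imp, forall_eq] at he
  exact mem_image.2 ⟨(a, b), mem_offDiag.2 ⟨he.2.1, he.2.2, he.1.ne⟩, rfl⟩

lemma edgesBetween_le_mul (G : SimpleGraph V) (X Y : Finset V) :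
    edgesBetween G X Y ≤ #X * #Y := by
  unfold edgesBetween
  have hsub : G.edgeFinset.filter (fun e => ∃ u ∈ X, ∃ w ∈ Y, e = s(u, w)) ⊆
      (X ×ˢ Y).image Sym2.mk.uncurry := fun e he => by
    obtain ⟨-, u, hu, w, hw, rfl⟩ := mem_filter.1 he
    exact mem_image.2 ⟨(u, w), mem_product.2 ⟨hu, hw⟩, rfl⟩
  exact (card_le_card hsub).trans (card_image_le.trans_eq (card_product X Y))

lemma semiPlanarBounds_of_card_le_seven (G : SimpleGraph V) (hV : Fintype.card V ≤ 7) :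
    SemiPlanarBounds G := by
  refine ⟨fun S => ?_, fun X Y hXY => ?_⟩
  · have hS : #S ≤ 7 := (card_le_univ S).trans hV
    refine (edgesWithin_le_choose_two G S).trans ?_
    rw [Nat.choose_two_right]
    exact Nat.div_le_of_le_mul (by nlinarith [Nat.mul_le_mul_left (#S) (show #S - 1 ≤ 6 by omega)])
  · have hXY : #X + #Y ≤ 7 :=
      (card_union_of_disjoint hXY).symm.trans_le ((card_le_univ _).trans hV)
    refine (edgesBetween_le_mul G X Y).trans ?_
    have hX : #X ≤ 7 := by omega
    interval_cases #X <;> omega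

lemma edgesWithin_sum_le (G : SimpleGraph V) (H : SimpleGraph W) (S : Finset (V ⊕ W)) :
    edgesWithin (G ⊕g H) S ≤ edgesWithin G S.toLeft + edgesWithin H S.toRight := by
  rw [edgesWithin_eq_card_filter]
  refine (card_le_of_subset_edgeFinset_sum (filter_subset _ _)).trans
    (add_le_add (card_le_card (monotone_filter_right _ ?_))
      (card_le_card (monotone_filter_right _ ?_))) <;>
  · intro e _ he v hv
    simpa using (mem_filter.1 he).2 _ (Sym2.mem_map.2 ⟨v, hv, rfl⟩)

lemma edgesBetween_sum_le (G : SimpleGraph V) (H : SimpleGraph W) (X Y : Finset (V ⊕ W)) :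
    edgesBetween (G ⊕g H) X Y ≤
      edgesBetween G X.toLeft Y.toLeft + edgesBetween H X.toRight Y.toRight := by
  rw [edgesBetween_eq_card_filter]
  refine (card_le_of_subset_edgeFinset_sum (filter_subset _ _)).trans
    (add_le_add (card_le_card (monotone_filter_right _ ?_))
      (card_le_card (monotone_filter_right _ ?_))) <;>
  · intro e _ he
    obtain ⟨u, hu, w, hw, he⟩ := (mem_filter.1 he).2
    induction e using Sym2.ind with | _ a b =>
    rcases Sym2.eq_iff.1 he with ⟨rfl, rfl⟩ | ⟨rfl, rfl⟩
    · exact ⟨a, by simpa using hu, b, by simpa using hw, rfl⟩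
    · exact ⟨b, by simpa using hu, a, by simpa using hw, Sym2.eq_swap⟩

lemma SemiPlanarBounds.sum {G : SimpleGraph V} {H : SimpleGraph W} (hG : SemiPlanarBounds G)
    (hH : SemiPlanarBounds H) : SemiPlanarBounds (G ⊕g H) := by
  refine ⟨fun S => ?_, fun X Y hXY => ?_⟩
  · have := card_toLeft_add_card_toRight (u := S)
    linarith [edgesWithin_sum_le G H S, hG.1 S.toLeft, hH.1 S.toRight]
  · have := card_toLeft_add_card_toRight (u := X)
    have := card_toLeft_add_card_toRight (u := Y)
    have hl : Disjoint X.toLeft Y.toLeft := disjoint_left.2 fun _ ha hb =>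
      disjoint_left.1 hXY (mem_toLeft.1 ha) (mem_toLeft.1 hb)
    have hr : Disjoint X.toRight Y.toRight := disjoint_left.2 fun _ ha hb =>
      disjoint_left.1 hXY (mem_toRight.1 ha) (mem_toRight.1 hb)
    linarith [edgesBetween_sum_le G H X Y, hG.2 _ _ hl, hH.2 _ _ hr]

lemma SemiPlanarBounds.exists_degree_le_six [Nonempty V] {G : SimpleGraph V}
    (hG : SemiPlanarBounds G) : ∃ v, G.degree v ≤ 6 := by
  have hE : #G.edgeFinset ≤ 3 * Fintype.card V := by
    simpa [edgesWithin] using hG.1 univ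
  have hsum : ∑ v, G.degree v ≤ ∑ _v : V, 6 := by
    rw [G.sum_degrees_eq_twice_card_edges, sum_const, card_univ, smul_eq_mul]
    omega
  obtain ⟨v, -, hv⟩ := exists_le_of_sum_le univ_nonempty hsum
  exact ⟨v, hv⟩

end EdgeCounts

section Coloring

variable [Fintype V] {G : SimpleGraph V} {r : ℕ}

lemma card_filter_eq_card_filter_compl_singleton_add (v : V) (p : V → Prop) [DecidablePred p] :
    #{w | p w} = #{w : ({v}ᶜ : Set V) | p w} + if p v then 1 else 0 := by
  simp only [card_filter]
  rw [Fintype.sum_eq_add_sum_compl v, add_comm,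
    sum_subtype ({v}ᶜ : Finset V) (p := (· ∈ ({v}ᶜ : Set V))) (by simp)]

lemma sum_card_colorClass (c : V → Fin r) : ∑ i, #{v | c v = i} = Fintype.card V :=
  (card_eq_sum_card_fiberwise fun v _ => mem_univ (c v)).symm

namespace IsEquitableColoring

variable {c : V → Fin r}

lemma equitableOn (hc : IsEquitableColoring G r c) :
    Set.EquitableOn ((univ : Finset (Fin r)) : Set (Fin r)) fun i => #{v | c v = i} :=
  fun i j _ _ => hc.2 i j

lemma div_le_card_class (hc : IsEquitableColoring G r c) (i : Fin r) :
    Fintype.card V / r ≤ #{v | c v = i} := by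
  simpa [sum_card_colorClass] using EquitableOn.le hc.equitableOn (mem_univ i)

lemma card_small_classes_eq_mod (hc : IsEquitableColoring G r c) :
    #{i | #{v | c v = i} = Fintype.card V / r} = r - Fintype.card V % r := by
  simpa [sum_card_colorClass] using EquitableOn.card_filter_eq_average hc.equitableOn

lemma of_induce_compl_singleton {v : V} (hc : IsEquitableColoring (G.induce {v}ᶜ) r fun w => c w)
    (hv : ∀ w, G.Adj v w → c w ≠ c v)
    (hmin : ∀ i, #{w : ({v}ᶜ : Set V) | c w = c v} ≤ #{w : ({v}ᶜ : Set V) | c w = i}) :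
    IsEquitableColoring G r c := by
  refine ⟨fun u w huw => ?_, fun i j => ?_⟩
  · by_cases hu : u = v
    · subst hu; exact (hv w huw).symm
    by_cases hw : w = v
    · subst hw; exact hv u huw.symm
    exact hc.1 ⟨u, hu⟩ ⟨w, hw⟩ huw
  · rw [card_filter_eq_card_filter_compl_singleton_add v,
      card_filter_eq_card_filter_compl_singleton_add v]
    have hij := hc.2 i j
    beta_reduce at hij
    have := hmin i
    have := hmin j
    split_ifs with hi hj hj <;> subst_vars <;> omega

lemma exists_extend {v : V} {c : ({v}ᶜ : Set V) → Fin r}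
    (hc : IsEquitableColoring (G.induce {v}ᶜ) r c)
    (hdeg : G.degree v < r - (Fintype.card V - 1) % r) :
    ∃ c' : V → Fin r, IsEquitableColoring G r c' := by
  have hcard : Fintype.card ({v}ᶜ : Set V) = Fintype.card V - 1 := by simp [filter_ne']
  set used := ((G.neighborFinset v).subtype (· ∈ ({v}ᶜ : Set V))).image c
  have hused : #used < #{i | #{w | c w = i} = Fintype.card ({v}ᶜ : Set V) / r} := by
    rw [hc.card_small_classes_eq_mod, hcard]
    refine lt_of_le_of_lt (card_image_le.trans ?_) hdeg
    rw [card_subtype, ← G.card_neighborFinset_eq_degree]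
    exact card_filter_le _ _
  obtain ⟨j, hj_small, hj_unused⟩ := exists_mem_notMem_of_card_lt_card hused
  let c' : V → Fin r := fun w => if h : w ∈ ({v}ᶜ : Set V) then c ⟨w, h⟩ else j
  have hc'v : c' v = j := dif_neg (by simp)
  have hc' : ∀ w : ({v}ᶜ : Set V), c' w = c w := fun w => dif_pos w.2
  refine ⟨c', of_induce_compl_singleton (v := v) ?_ (fun w hw hwj => hj_unused ?_) fun i => ?_⟩
  · simpa only [hc'] using hc
  · have hw' : w ∈ ({v}ᶜ : Set V) := (G.ne_of_adj hw).symm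
    rw [hc'v] at hwj
    exact mem_image.2 ⟨⟨w, hw'⟩, mem_subtype.2 ((G.mem_neighborFinset v w).2 hw),
      (hc' ⟨w, hw'⟩).symm.trans hwj⟩
  · simp only [hc', hc'v]
    exact (mem_filter.1 hj_small).2.trans_le (hc.div_le_card_class i)

lemma comp_inl_of_sum_top [Fintype W] {c : V ⊕ W → Fin r} (hc : IsEquitableColoring (G ⊕g ⊤) r c)
    (hdvd : r ∣ Fintype.card (V ⊕ W)) : IsEquitableColoring G r (c ∘ Sum.inl) := by
  have hall : ∀ i, #{x | c x = i} = Fintype.card (V ⊕ W) / r := by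
    have := hc.card_small_classes_eq_mod
    rw [Nat.mod_eq_zero_of_dvd hdvd, Nat.sub_zero] at this
    exact fun i => filter_card_eq (by rw [this, card_univ, Fintype.card_fin]) i (mem_univ i)
  have hsplit : ∀ i, #{x | c x = i} = #{v | c (.inl v) = i} + #{w | c (.inr w) = i} := by
    intro i
    simp only [card_filter, Fintype.sum_sum_type]
  have hinr : ∀ i, #{w | c (.inr w) = i} ≤ 1 := fun i =>
    card_le_one.2 fun w₁ h₁ w₂ h₂ => by_contra fun hne =>
      hc.1 _ _ (SimpleGraph.sum_adj_inr.2 hne) ((mem_filter.1 h₁).2.trans (mem_filter.1 h₂).2.symm)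
  refine ⟨fun u w huw => hc.1 _ _ (SimpleGraph.sum_adj_inl.2 huw), fun i j => ?_⟩
  have := hsplit i
  have := hsplit j
  have := hall i
  have := hall j
  have := hinr i
  have := hinr j
  simp only [Function.comp_apply]
  omega

end IsEquitableColoring

end Coloring

section Reduction

variable {r : ℕ}

theorem exists_equitableColoring_of_mod_add_six_le
    (hdiv : ∀ (W : Type) [Fintype W] (H : SimpleGraph W),
      SemiPlanarBounds H → (∀ w : W, H.degree w ≤ r) → r ∣ Fintype.card W →
      ∃ c : W → Fin r, IsEquitableColoring H r c) (t : ℕ) :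
    ∀ (V : Type) [Fintype V] (G : SimpleGraph V), SemiPlanarBounds G →
      (∀ v, G.degree v ≤ r) → Fintype.card V % r = t → t + 6 ≤ r →
      ∃ c : V → Fin r, IsEquitableColoring G r c := by
  induction t with
  | zero => exact fun V _ G hG hΔ ht _ => hdiv V G hG hΔ (Nat.dvd_of_mod_eq_zero ht)
  | succ t ih =>
    intro V _ G hG hΔ ht htr
    have : Nonempty V := Fintype.card_pos_iff.1 (Nat.pos_of_ne_zero fun h => by simp [h] at ht)
    obtain ⟨v, hv⟩ := hG.exists_degree_le_six
    have hmod : (Fintype.card V - 1) % r = t := by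
      have := Nat.div_add_mod (Fintype.card V) r
      rw [show Fintype.card V - 1 = t + r * (Fintype.card V / r) by omega,
        Nat.add_mul_mod_self_left, Nat.mod_eq_of_lt (by omega)]
    let f := (SimpleGraph.Embedding.induce ({v}ᶜ : Set V) (G := G)).toCopy
    obtain ⟨c, hc⟩ := ih _ (G.induce {v}ᶜ) (hG.of_copy f) (fun w => (f.degree_le w).trans (hΔ _))
      (by simpa [filter_ne'] using hmod) (by omega)
    exact hc.exists_extend (by omega)

theorem exists_equitableColoring_of_dvd_card_add
    (hdiv : ∀ (W : Type) [Fintype W] (H : SimpleGraph W),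
      SemiPlanarBounds H → (∀ w : W, H.degree w ≤ r) → r ∣ Fintype.card W →
      ∃ c : W → Fin r, IsEquitableColoring H r c)
    {d : ℕ} {V : Type} [Fintype V] {G : SimpleGraph V} (hG : SemiPlanarBounds G)
    (hΔ : ∀ v, G.degree v ≤ r) (hd : d ≤ 7) (hdr : d ≤ r + 1) (hdvd : r ∣ Fintype.card V + d) :
    ∃ c : V → Fin r, IsEquitableColoring G r c := by
  have hH : SemiPlanarBounds (G ⊕g (⊤ : SimpleGraph (Fin d))) :=
    hG.sum (semiPlanarBounds_of_card_le_seven _ (by simpa using hd))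
  have hdvd' : r ∣ Fintype.card (V ⊕ Fin d) := by simpa using hdvd
  have hHΔ : ∀ x, (G ⊕g (⊤ : SimpleGraph (Fin d))).degree x ≤ r := by
    rintro (v | i)
    · exact (degree_sum_inl G _ v).trans_le (hΔ v)
    · have := (⊤ : SimpleGraph (Fin d)).degree_lt_card_verts i
      rw [Fintype.card_fin] at this
      rw [degree_sum_inr]
      omega
  -- `hdiv` reads degrees through the classical `Fintype` instance on neighbour sets, while
  -- `G ⊕g ⊤` has its own; `convert` identifies the two.
  obtain ⟨c, hc⟩ := hdiv _ _ hH (by convert hHΔ) hdvd'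
  exact ⟨_, hc.comp_inl_of_sum_top hdvd'⟩

end Reduction

/-- **Lemma 2.2 (semi-planar case).** If every graph satisfying the semi-planar edge
bounds with maximum degree at most `r ≥ 9` and with number of vertices divisible by `r`
has an equitable `r`-coloring, then so does every graph satisfying the semi-planar edge
bounds with maximum degree at most `r`. -/
theorem semiPlanar_divisible_reduction (r : ℕ) (hr : 9 ≤ r)
    (hdiv : ∀ (W : Type) [Fintype W] (H : SimpleGraph W),
      SemiPlanarBounds H → (∀ w : W, H.degree w ≤ r) → r ∣ Fintype.card W →
      ∃ c : W → Fin r, IsEquitableColoring H r c)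
    (V : Type) [Fintype V] (G : SimpleGraph V)
    (hG : SemiPlanarBounds G) (hΔ : ∀ v : V, G.degree v ≤ r) :
    ∃ c : V → Fin r, IsEquitableColoring G r c := by
  by_cases ht : Fintype.card V % r + 6 ≤ r
  · exact exists_equitableColoring_of_mod_add_six_le hdiv _ V G hG hΔ rfl ht
  have hmod := Nat.mod_lt (Fintype.card V) (by omega : 0 < r)
  have hle := Nat.mod_le (Fintype.card V) r
  refine exists_equitableColoring_of_dvd_card_add hdiv hG hΔ
    (d := r - Fintype.card V % r) (by omega) (by omega) ?_
  rw [show Fintype.card V + (r - Fintype.card V % r) = Fintype.card V - Fintype.card V % r + r by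
    omega]
  exact dvd_add (Nat.dvd_sub_mod _) dvd_rfl

end Equitable
end

section
/- Let F be a finite simple graph on n vertices with at most 3n edges, and let D be the set of vertices of F that have at least one non-neighbor (i.e., whose degree is at most n − 2). If n ≥ 9 then |D| ≥ 5, and if n = 8 then |D| ≥ 4. (This is Claim 3.1 of the paper: taking F to be the subgraph induced by a vertex v together with its set Q(v) of solo neighbors in a semi-planar graph, so that n = q(v) + 1 and |D| = q'(v), it says that q(v) ≥ 8 implies q'(v) ≥ 5 and q(v) = 7 implies q'(v) ≥ 4.) -/
open scoped Classical

namespace Equitable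

variable {V : Type*}

/-- **Claim 3.1.** Let `F` be a graph on `n` vertices with at most `3n` edges and let `D`
be the set of vertices having a non-neighbor.  If `n ≥ 9` then `|D| ≥ 5`, and if `n = 8`
then `|D| ≥ 4`. -/
theorem few_edges_many_nonneighbors (V : Type*) [Fintype V] (F : SimpleGraph V) (n : ℕ)
    (hn : Fintype.card V = n) (hE : F.edgeFinset.card ≤ 3 * n) :
    (9 ≤ n →
      5 ≤ (Finset.univ.filter fun v : V => ∃ u : V, u ≠ v ∧ ¬ F.Adj v u).card) ∧
    (n = 8 →
      4 ≤ (Finset.univ.filter fun v : V => ∃ u : V, u ≠ v ∧ ¬ F.Adj v u).card) := by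
  classical
  set D : Finset V := Finset.univ.filter fun v : V => ∃ u : V, u ≠ v ∧ ¬ F.Adj v u with hD
  set d := D.card with hd
  set a := Fᶜ.edgeFinset.card with ha
  have hmem : ∀ v : V, v ∈ D ↔ ∃ u : V, u ≠ v ∧ ¬ F.Adj v u := by
    intro v; simp [hD]
  -- each vertex with positive complement degree is in D, and its Fᶜ-neighbors are in D
  have hnbr : ∀ v : V, Fᶜ.neighborFinset v ⊆ D.erase v := by
    intro v u hu
    rw [SimpleGraph.mem_neighborFinset, SimpleGraph.compl_adj] at hu
    obtain ⟨hne, hnadj⟩ := hu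
    rw [Finset.mem_erase, hmem]
    refine ⟨?_, v, ?_, fun h => hnadj h.symm⟩
    · first | exact hne | exact Ne.symm hne
    · first | exact hne | exact Ne.symm hne
  have hdegD : ∀ v ∈ D, Fᶜ.degree v ≤ d - 1 := by
    intro v hv
    calc Fᶜ.degree v ≤ (D.erase v).card := Finset.card_le_card (hnbr v)
      _ = d - 1 := by rw [Finset.card_erase_of_mem hv]
  have hdeg0 : ∀ v ∉ D, Fᶜ.degree v = 0 := by
    intro v hv
    by_contra h
    have hpos : 0 < Fᶜ.degree v := Nat.pos_of_ne_zero h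
    rw [SimpleGraph.degree_pos_iff_exists_adj] at hpos
    obtain ⟨w, hw⟩ := hpos
    rw [SimpleGraph.compl_adj] at hw
    exact hv ((hmem v).2 ⟨w, fun h => hw.1 h.symm, hw.2⟩)
  have hsum : ∑ v, Fᶜ.degree v ≤ d * (d - 1) := by
    have h1 : ∑ v ∈ D, Fᶜ.degree v = ∑ v, Fᶜ.degree v :=
      Finset.sum_subset (Finset.subset_univ D) (fun v _ hv => hdeg0 v hv)
    rw [← h1]
    calc ∑ v ∈ D, Fᶜ.degree v ≤ ∑ _v ∈ D, (d - 1) := Finset.sum_le_sum hdegD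
      _ = d * (d - 1) := by rw [Finset.sum_const, smul_eq_mul]
  have h2a : 2 * a ≤ d * (d - 1) := by
    rw [ha, ← SimpleGraph.sum_degrees_eq_twice_card_edges]; exact hsum
  -- degree sum identity
  have hdegsum : ∀ v : V, Fᶜ.degree v + F.degree v = n - 1 := by
    intro v
    have h1 : Fᶜ.degree v = Fintype.card V - 1 - F.degree v := SimpleGraph.degree_compl F v
    have h2 : F.degree v < Fintype.card V := F.degree_lt_card_verts v
    omega
  have htot : 2 * a + 2 * F.edgeFinset.card = n * (n - 1) := by
    rw [ha, ← SimpleGraph.sum_degrees_eq_twice_card_edges,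
      ← SimpleGraph.sum_degrees_eq_twice_card_edges, ← Finset.sum_add_distrib]
    rw [Finset.sum_congr rfl (fun v _ => hdegsum v), Finset.sum_const, smul_eq_mul,
      Finset.card_univ, hn]
  constructor
  · intro h9
    by_contra hlt
    push_neg at hlt
    have hd4 : d ≤ 4 := by omega
    have h12 : d * (d - 1) ≤ 12 := by interval_cases d <;> norm_num
    have hmn : 8 * n ≤ n * (n - 1) := by
      calc 8 * n = n * 8 := by ring
        _ ≤ n * (n - 1) := Nat.mul_le_mul_left n (by omega)
    omega
  · intro h8
    subst h8
    by_contra hlt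
    push_neg at hlt
    have hd3 : d ≤ 3 := by omega
    have h6 : d * (d - 1) ≤ 6 := by interval_cases d <;> norm_num
    omega

end Equitable
end

section
/- Let G be a finite simple graph containing no subgraph isomorphic to the complete bipartite graph K_{3,3}. Let v be a vertex of G and let Q be a set of neighbors of v with |Q| ≥ 5, and let Q' be the set of vertices u ∈ Q for which some vertex of Q \ {u} is non-adjacent to u. Then |Q'| ≥ |Q| − 1. (This is Claim 4.1 of the paper: in a planar graph, if q(v) ≥ 5 then q'(v) ≥ q(v) − 1.) -/
open scoped Classical

namespace Equitable

variable {V : Type*}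

/-- **Claim 4.1.** In a graph with no `K_{3,3}` subgraph, if `Q` is a set of at least `5`
neighbors of a vertex `v`, then at least `|Q| − 1` vertices of `Q` have a non-neighbor
in `Q`. -/
theorem no_K33_solo_nonneighbors (V : Type*) [Fintype V] (G : SimpleGraph V)
    (hK33 : ¬ ∃ a₁ a₂ a₃ b₁ b₂ b₃ : V,
      a₁ ≠ a₂ ∧ a₁ ≠ a₃ ∧ a₂ ≠ a₃ ∧ b₁ ≠ b₂ ∧ b₁ ≠ b₃ ∧ b₂ ≠ b₃ ∧
      G.Adj a₁ b₁ ∧ G.Adj a₁ b₂ ∧ G.Adj a₁ b₃ ∧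
      G.Adj a₂ b₁ ∧ G.Adj a₂ b₂ ∧ G.Adj a₂ b₃ ∧
      G.Adj a₃ b₁ ∧ G.Adj a₃ b₂ ∧ G.Adj a₃ b₃)
    (v : V) (Q : Finset V) (hQ : ∀ u ∈ Q, G.Adj v u) (hQ5 : 5 ≤ Q.card) :
    Q.card - 1 ≤ (Q.filter fun u => ∃ w ∈ Q, w ≠ u ∧ ¬ G.Adj u w).card := by
  classical
  have key : (Q.filter fun u => ¬ ∃ w ∈ Q, w ≠ u ∧ ¬ G.Adj u w).card ≤ 1 := by
    by_contra h
    rw [not_le] at h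
    obtain ⟨u1, hu1, u2, hu2, hne⟩ := Finset.one_lt_card.mp h
    simp only [Finset.mem_filter] at hu1 hu2
    push_neg at hu1 hu2
    obtain ⟨hu1Q, hu1adj⟩ := hu1
    obtain ⟨hu2Q, hu2adj⟩ := hu2
    set S := (Q.erase u1).erase u2 with hS
    have h2 : u2 ∈ Q.erase u1 := Finset.mem_erase.mpr ⟨hne.symm, hu2Q⟩
    have hScard : 3 ≤ S.card := by
      rw [hS, Finset.card_erase_of_mem h2, Finset.card_erase_of_mem hu1Q]
      omega
    obtain ⟨w1, hw1⟩ := Finset.card_pos.mp (by omega : 0 < S.card)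
    have hScard2 : 2 ≤ (S.erase w1).card := by
      have := Finset.card_erase_of_mem hw1; omega
    obtain ⟨w2, hw2⟩ := Finset.card_pos.mp (by omega : 0 < (S.erase w1).card)
    have hScard3 : 1 ≤ ((S.erase w1).erase w2).card := by
      have := Finset.card_erase_of_mem hw2; omega
    obtain ⟨w3, hw3⟩ := Finset.card_pos.mp (by omega : 0 < ((S.erase w1).erase w2).card)
    have hw2' := Finset.mem_erase.mp hw2
    have hw3' := Finset.mem_erase.mp hw3
    have hw3'' := Finset.mem_erase.mp hw3'.2
    have memS : ∀ w, w ∈ S → w ∈ Q ∧ w ≠ u1 ∧ w ≠ u2 := by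
      intro w hw
      have h := Finset.mem_erase.mp hw
      have h' := Finset.mem_erase.mp h.2
      exact ⟨h'.2, h'.1, h.1⟩
    obtain ⟨hw1Q, hw1u1, hw1u2⟩ := memS w1 hw1
    obtain ⟨hw2Q, hw2u1, hw2u2⟩ := memS w2 hw2'.2
    obtain ⟨hw3Q, hw3u1, hw3u2⟩ := memS w3 hw3''.2
    have hvu1 : v ≠ u1 := (hQ u1 hu1Q).ne
    have hvu2 : v ≠ u2 := (hQ u2 hu2Q).ne
    exact hK33 ⟨v, u1, u2, w1, w2, w3, hvu1, hvu2, hne,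
      hw2'.1.symm, hw3''.1.symm, hw3'.1.symm,
      hQ w1 hw1Q, hQ w2 hw2Q, hQ w3 hw3Q,
      hu1adj w1 hw1Q hw1u1, hu1adj w2 hw2Q hw2u1, hu1adj w3 hw3Q hw3u1,
      hu2adj w1 hw1Q hw1u2, hu2adj w2 hw2Q hw2u2, hu2adj w3 hw3Q hw3u2⟩
  have hsum := Finset.card_filter_add_card_filter_not
    (s := Q) (p := fun u => ∃ w ∈ Q, w ≠ u ∧ ¬ G.Adj u w)
  omega

end Equitable
end

section
/- Setup: let r ≥ 2 and s ≥ 1 be integers, let G be a finite simple graph on rs vertices with a distinguished vertex x, and let V_1, …, V_r be an almost equitable coloring of G − x with small class V_1. Suppose G admits no equitable r-coloring. Then every accessible class contains a neighbor of x. Consequently, the number of non-accessible classes is at least r − deg_G(x). (This is the argument establishing inequality (4) of the paper: D(x) ⊆ B and b ≥ r − 5 when deg(x) ≤ 5.) -/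
/-!
If an accessible class `V_i` contained no neighbour of `x`, take a simple path
`V_i = W_0 → W_1 → ⋯ → W_k = V_1` in the auxiliary digraph and, working back from `V_1`, move
the witness of each arc `W_j → W_{j+1}` into `W_{j+1}`. Each move keeps the colouring proper
(the witness has no neighbour in its new class) and passes the deficiency of the small class one
step back, so finally a subset of `V_i` is the small class; adding `x` to it yields an equitable
`r`-colouring. As the classes are disjoint, the accessible classes then contain distinct
neighbours of `x`.
-/

open scoped Classical

namespace Equitable

variable {V : Type*}

theorem _root_.List.exists_nodup_isChain_cons_of_relationReflTransGen {α : Type*}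
    {r : α → α → Prop} {a b : α} (h : Relation.ReflTransGen r a b) :
    ∃ l, (a :: l).Nodup ∧ (a :: l).IsChain r ∧ (a :: l).getLast (List.cons_ne_nil _ _) = b := by
  induction h using Relation.ReflTransGen.head_induction_on with
  | refl => exact ⟨[], List.nodup_singleton _, .singleton _, rfl⟩
  | @head a c hac _ ih =>
    obtain ⟨l, hnd, hch, hlast⟩ := ih
    by_cases ha : a ∈ c :: l
    · obtain ⟨p, q, hpq⟩ := List.append_of_mem ha
      rw [hpq] at hnd hch
      refine ⟨q, hnd.of_append_right, hch.right_of_append, ?_⟩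
      simp_rw [hpq, List.getLast_append_of_ne_nil _ (List.cons_ne_nil _ _)] at hlast
      exact hlast
    · exact ⟨c :: l, List.nodup_cons.2 ⟨ha, hnd⟩, hch.cons_cons hac,
        by rwa [List.getLast_cons_cons]⟩

open Finset Function

variable [Fintype V] {G : SimpleGraph V} {x : V} {r s : ℕ}

/-- Colourings of `G − x` are encoded as functions on all of `V` whose value at `x` is
ignored. -/
noncomputable def colorClass (x : V) (f : V → Fin r) (a : Fin r) : Finset V :=
  univ.filter fun w => w ≠ x ∧ f w = a

lemma mem_colorClass {f : V → Fin r} {a : Fin r} {w : V} :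
    w ∈ colorClass x f a ↔ w ≠ x ∧ f w = a := by
  simp [colorClass]

lemma colorClass_update {f : V → Fin r} {v : V} (hv : v ≠ x) (m a : Fin r) :
    colorClass x (update f v m) a =
      if a = m then insert v (colorClass x f a) else (colorClass x f a).erase v := by
  ext w
  by_cases hwv : w = v <;> by_cases ham : a = m <;>
    simp [mem_colorClass, hwv, ham, hv, @eq_comm _ m]

lemma exists_eq_colorClass [NeZero r] {P : Fin r → Finset V}
    (hdisj : ∀ i j : Fin r, i ≠ j → Disjoint (P i) (P j))
    (hcover : ∀ v : V, (∃ i, v ∈ P i) ↔ v ≠ x) :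
    ∃ f : V → Fin r, P = colorClass x f := by
  choose! f hf using fun v => (hcover v).2
  refine ⟨f, funext fun a => ext fun w => ?_⟩
  rw [mem_colorClass]
  refine ⟨fun hw => ?_, fun ⟨hwx, hfw⟩ => hfw ▸ hf w hwx⟩
  have hwx := (hcover w).1 ⟨a, hw⟩
  exact ⟨hwx, by_contra fun hne => disjoint_left.1 (hdisj _ _ hne) (hf w hwx) hw⟩

/-- `AEColoring G x s (colorClass x f)` is the case `k = 0`; the small class `k` moves
along a path of the auxiliary digraph. -/
structure IsAlmostEquitable (G : SimpleGraph V) (x : V) (s : ℕ) (f : V → Fin r) (k : Fin r) :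
    Prop where
  indep : ∀ a : Fin r, ∀ u ∈ colorClass x f a, ∀ w ∈ colorClass x f a, ¬ G.Adj u w
  card_small : (colorClass x f k).card = s - 1
  card_of_ne : ∀ a : Fin r, a ≠ k → (colorClass x f a).card = s

lemma IsAlmostEquitable.update {f : V → Fin r} {m : Fin r} (hf : IsAlmostEquitable G x s f m)
    {v : V} (hv : v ≠ x) (hvm : f v ≠ m) (hmov : ∀ u ∈ colorClass x f m, ¬ G.Adj v u) :
    IsAlmostEquitable G x s (update f v m) (f v) := by
  have hvf : v ∈ colorClass x f (f v) := mem_colorClass.2 ⟨hv, rfl⟩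
  have hvm' : v ∉ colorClass x f m := fun h => hvm (mem_colorClass.1 h).2
  have hs : 1 ≤ s := by
    have := hf.card_of_ne _ hvm
    have := card_pos.2 ⟨v, hvf⟩
    omega
  refine ⟨fun a u hu w hw => ?_, ?_, fun a ha => ?_⟩
  · rw [colorClass_update hv] at hu hw
    split_ifs at hu hw with ham
    · subst ham
      rcases mem_insert.1 hu with rfl | hu' <;> rcases mem_insert.1 hw with rfl | hw'
      · exact G.loopless.irrefl _
      · exact hmov w hw'
      · exact fun h => hmov u hu' h.symm
      · exact hf.indep a u hu' w hw'
    · exact hf.indep a u (mem_of_mem_erase hu) w (mem_of_mem_erase hw)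
  · rw [colorClass_update hv, if_neg hvm, card_erase_of_mem hvf, hf.card_of_ne _ hvm]
  · rw [colorClass_update hv]
    split_ifs with ham
    · subst ham
      rw [card_insert_of_notMem hvm', hf.card_small]
      omega
    · have hva : v ∉ colorClass x f a := fun h => ha (mem_colorClass.1 h).2.symm
      rw [erase_eq_of_notMem hva, hf.card_of_ne a ham]

lemma IsAlmostEquitable.isEquitableColoring_update {g : V → Fin r} {i : Fin r}
    (hg : IsAlmostEquitable G x s g i) (hx : ∀ v ∈ colorClass x g i, ¬ G.Adj x v) :
    IsEquitableColoring G r (Function.update g x i) := by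
  have hclass : ∀ a, univ.filter (fun v => Function.update g x i v = a) =
      if a = i then insert x (colorClass x g a) else colorClass x g a := by
    intro a
    ext w
    by_cases hwx : w = x <;> by_cases hai : a = i <;>
      simp [mem_colorClass, hwx, hai, @eq_comm _ i]
  have hcard : ∀ a, (univ.filter fun v => Function.update g x i v = a).card =
      if a = i then s - 1 + 1 else s := by
    intro a
    rw [hclass]
    split_ifs with hai
    · subst hai
      rw [card_insert_of_notMem fun h => (mem_colorClass.1 h).1 rfl, hg.card_small]
    · exact hg.card_of_ne a hai
  refine ⟨fun u v huv hc => ?_, fun a b => ?_⟩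
  · have hxg : ∀ w, w ≠ x → Function.update g x i w = g w := fun w hw => update_of_ne hw _ _
    by_cases hux : u = x
    · subst hux
      have hvx : v ≠ u := huv.ne.symm
      rw [update_self, hxg v hvx] at hc
      exact hx v (mem_colorClass.2 ⟨hvx, hc.symm⟩) huv
    by_cases hvx : v = x
    · subst hvx
      rw [update_self, hxg u hux] at hc
      exact hx u (mem_colorClass.2 ⟨hux, hc⟩) huv.symm
    rw [hxg u hux, hxg v hvx] at hc
    exact hg.indep (g u) u (mem_colorClass.2 ⟨hux, rfl⟩) v (mem_colorClass.2 ⟨hvx, hc.symm⟩) huv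
  · rw [hcard, hcard]
    split_ifs <;> omega

theorem exists_isAlmostEquitable_of_isChain [NeZero r] {f : V → Fin r}
    (hf : IsAlmostEquitable G x s f 0) (i : Fin r) (l : List (Fin r)) (hnd : (i :: l).Nodup)
    (hch : (i :: l).IsChain (Arc G (colorClass x f)))
    (hlast : (i :: l).getLast (List.cons_ne_nil _ _) = 0) :
    ∃ g, IsAlmostEquitable G x s g i ∧ colorClass x g i ⊆ colorClass x f i ∧
      ∀ a ∉ i :: l, colorClass x g a = colorClass x f a := by
  induction l generalizing i with
  | nil =>
    obtain rfl : i = 0 := hlast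
    exact ⟨f, hf, subset_rfl, fun _ _ => rfl⟩
  | cons m t ih =>
    obtain ⟨⟨him, v, hv, hmov⟩, hch⟩ := List.isChain_cons_cons.1 hch
    obtain ⟨hi, hnd⟩ := List.nodup_cons.1 hnd
    obtain ⟨g, hg, hgm, hgf⟩ := ih m hnd hch (by rwa [List.getLast_cons_cons] at hlast)
    -- `i` does not occur later on the path, so its class is still intact.
    have hgi : colorClass x g i = colorClass x f i := hgf i hi
    obtain ⟨hvx, hgv⟩ := mem_colorClass.1 (hgi ▸ hv)
    have hg' := hg.update hvx (hgv ▸ him) fun u hu => hmov u (hgm hu)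
    rw [hgv] at hg'
    refine ⟨update g v m, hg', ?_, fun a ha => ?_⟩
    · rw [colorClass_update hvx, if_neg him, hgi]
      exact erase_subset _ _
    · obtain ⟨hai, ha⟩ := not_or.1 (List.mem_cons.not.1 ha)
      have hva : v ∉ colorClass x f a := fun h =>
        hai ((mem_colorClass.1 h).2 ▸ (mem_colorClass.1 hv).2)
      rw [colorClass_update hvx, if_neg fun h : a = m => ha (h ▸ List.mem_cons_self), hgf a ha,
        erase_eq_of_notMem hva]

theorem exists_isEquitableColoring_of_accessible [NeZero r] {P : Fin r → Finset V}
    (hP : AEColoring G x s P) {i : Fin r} (hi : Accessible G P i)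
    (hx : ∀ v ∈ P i, ¬ G.Adj x v) : ∃ c, IsEquitableColoring G r c := by
  obtain ⟨f, rfl⟩ := exists_eq_colorClass hP.1 hP.2.1
  obtain ⟨l, hnd, hch, hlast⟩ := List.exists_nodup_isChain_cons_of_relationReflTransGen hi
  obtain ⟨g, hg, hgi, -⟩ := exists_isAlmostEquitable_of_isChain
    ⟨hP.2.2.1, hP.2.2.2.1, hP.2.2.2.2⟩ i l hnd hch hlast
  exact ⟨_, hg.isEquitableColoring_update fun v hv => hx v (hgi hv)⟩

theorem accessible_classes_meet_nbhd_general (V : Type*) [Fintype V] (G : SimpleGraph V) (x : V)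
    (r s : ℕ) [NeZero r]
    (P : Fin r → Finset V) (hP : AEColoring G x s P)
    (hno : ¬ ∃ c : V → Fin r, IsEquitableColoring G r c) :
    (∀ i : Fin r, Accessible G P i → ∃ v ∈ P i, G.Adj x v) ∧
    r - G.degree x ≤ (Finset.univ.filter fun i : Fin r => ¬ Accessible G P i).card := by
  have hmeet : ∀ i, Accessible G P i → ∃ v ∈ P i, G.Adj x v := fun i hi => by
    by_contra! hx
    exact hno (exists_isEquitableColoring_of_accessible hP hi hx)
  refine ⟨hmeet, ?_⟩
  have hacc : (univ.filter fun i => Accessible G P i).card ≤ G.degree x := by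
    rw [← G.card_neighborFinset_eq_degree]
    refine card_le_card_of_forall_subsingleton (fun i v => v ∈ P i) (fun i hi => ?_)
      fun v _ i hi j hj => by_contra fun hij => disjoint_left.1 (hP.1 i j hij) hi.2 hj.2
    obtain ⟨v, hv, hxv⟩ := hmeet i (mem_filter.1 hi).2
    exact ⟨v, (G.mem_neighborFinset x v).2 hxv, hv⟩
  have hsplit := card_filter_add_card_filter_not (s := univ) fun i : Fin r => Accessible G P i
  rw [card_univ, Fintype.card_fin] at hsplit
  omega

/-- If `G` (on `r·s` vertices) has no equitable `r`-coloring, then for any almost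
equitable coloring of `G − x`, every accessible class contains a neighbor of `x`;
consequently at least `r − deg_G(x)` classes are non-accessible. -/
theorem accessible_classes_meet_nbhd (V : Type*) [Fintype V] (G : SimpleGraph V) (x : V)
    (r s : ℕ) [NeZero r] (hr : 2 ≤ r) (hs : 1 ≤ s) (hcard : Fintype.card V = r * s)
    (P : Fin r → Finset V) (hP : AEColoring G x s P)
    (hno : ¬ ∃ c : V → Fin r, IsEquitableColoring G r c) :
    (∀ i : Fin r, Accessible G P i → ∃ v ∈ P i, G.Adj x v) ∧
    r - G.degree x ≤ (Finset.univ.filter fun i : Fin r => ¬ Accessible G P i).card :=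
  accessible_classes_meet_nbhd_general V G x r s P hP hno

end Equitable
end

section
/- Setup: let r ≥ 9 and s ≥ 1 be integers, let G be a finite simple graph on rs vertices satisfying the semi-planar bipartite edge bound, let x be a vertex of G, and let V_1, …, V_r be an almost equitable coloring of G − x with small class V_1, auxiliary digraph H, accessible classes A and non-accessible classes B. If |A| ≤ 2, then the subdigraph of H induced on B has a strong component containing at least r − 2 classes, i.e., there is a set S of at least r − 2 non-accessible classes such that any two classes of S are mutually reachable by directed paths of H passing only through classes of B. (This is Claim 3.2 of the paper.) -/
open scoped Classical

namespace Equitable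

variable {V : Type*}

/-!
Call a set `X` of classes a one-way cut if no arc of `H` leaving `X` ends in the small class or
has a reverse arc. For `p ∈ X` and `q ∉ X` all of `P p` is then dominated by `P q`, or all of
`P q` (of size `s`) by `P p`, so at least `s · |X| · (r - |X|)` edges join the two sides, while
the bipartite bound allows at most `2(rs - 1)`: no one-way cut has `3 ≤ |X| ≤ r - 3` when
`r ≥ 9`. Unions of strong components of `H[B]` are one-way cuts. If all of them had fewer than
`r - 2` classes, each would therefore have at most two, and the components of three
non-accessible classes would form a one-way cut with between three and six classes.
-/

open Finset

section EdgeCounting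

variable {G : SimpleGraph V}

lemma card_interedges_le_edgesBetween [Fintype V] {A B : Finset V} (h : Disjoint A B) :
    #(G.interedges A B) ≤ edgesBetween G A B := by
  refine card_le_card_of_injOn (fun e => s(e.1, e.2)) ?_ ?_
  · rintro ⟨a, b⟩ hab
    obtain ⟨ha, hb, hadj⟩ := G.mk_mem_interedges_iff.1 hab
    simp only [coe_filter, Set.mem_ofPred_eq]
    exact ⟨G.mem_edgeFinset.2 hadj, a, ha, b, hb, rfl⟩
  · rintro ⟨a, b⟩ hab ⟨a', b'⟩ hab' he
    obtain ⟨ha, -, -⟩ := G.mk_mem_interedges_iff.1 hab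
    obtain ⟨-, hb', -⟩ := G.mk_mem_interedges_iff.1 hab'
    rcases Sym2.eq_iff.1 he with ⟨rfl, rfl⟩ | ⟨rfl, -⟩
    · rfl
    · exact absurd hb' (disjoint_left.1 h ha)

lemma card_le_card_interedges {A B : Finset V} (h : ∀ a ∈ A, ∃ b ∈ B, G.Adj a b) :
    #A ≤ #(G.interedges A B) := by
  refine card_le_card_of_surjOn Prod.fst fun a ha => ?_
  obtain ⟨b, hb, hab⟩ := h a ha
  exact ⟨(a, b), G.mk_mem_interedges_iff.2 ⟨ha, hb, hab⟩, rfl⟩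

lemma card_interedges_comm (A B : Finset V) : #(G.interedges A B) = #(G.interedges B A) :=
  have : Std.Symm G.Adj := ⟨fun _ _ => G.adj_symm⟩
  Rel.card_interedges_comm A B

lemma card_interedges_biUnion {ι : Type*} {P : ι → Finset V}
    (hP : ∀ i j, i ≠ j → Disjoint (P i) (P j)) (X Y : Finset ι) :
    #(G.interedges (X.biUnion P) (Y.biUnion P)) =
      ∑ ij ∈ X ×ˢ Y, #(G.interedges (P ij.1) (P ij.2)) := by
  rw [G.interedges_biUnion, card_biUnion]
  have index_eq {i j : ι} {v : V} (hi : v ∈ P i) (hj : v ∈ P j) : i = j :=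
    by_contra fun h => disjoint_left.1 (hP i j h) hi hj
  rintro ⟨i, j⟩ - ⟨i', j'⟩ - hne
  refine disjoint_left.2 fun e he he' => hne ?_
  simp only [G.mem_interedges_iff] at he he'
  rw [index_eq he.1 he'.1, index_eq he.2.1 he'.2.1]

end EdgeCounting

section AuxiliaryDigraph

variable {G : SimpleGraph V} {r : ℕ} {P : Fin r → Finset V}

lemma forall_exists_adj_of_not_arc {p q : Fin r} (hpq : p ≠ q) (h : ¬ Arc G P p q) :
    ∀ v ∈ P p, ∃ u ∈ P q, G.Adj v u := by
  by_contra! hv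
  exact h ⟨hpq, hv⟩

variable [NeZero r]

lemma Accessible.of_arc {p q : Fin r} (h : Arc G P p q) (hq : Accessible G P q) :
    Accessible G P p :=
  hq.head h

lemma card_filter_not_accessible :
    #(univ.filter fun i => ¬ Accessible G P i) = r - accCount G P := by
  rw [accCount, filter_not, card_sdiff_of_subset (filter_subset _ _), card_univ,
    Fintype.card_fin]

def ArcInB (G : SimpleGraph V) (P : Fin r → Finset V) (p q : Fin r) : Prop :=
  Arc G P p q ∧ ¬ Accessible G P p ∧ ¬ Accessible G P q

noncomputable def strongCompB (G : SimpleGraph V) (P : Fin r → Finset V) (i : Fin r) :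
    Finset (Fin r) :=
  univ.filter fun j =>
    Relation.ReflTransGen (ArcInB G P) i j ∧ Relation.ReflTransGen (ArcInB G P) j i

lemma self_mem_strongCompB (i : Fin r) : i ∈ strongCompB G P i :=
  mem_filter.2 ⟨mem_univ _, .refl, .refl⟩

lemma not_accessible_of_reflTransGen_arcInB {i j : Fin r}
    (h : Relation.ReflTransGen (ArcInB G P) i j) (hi : ¬ Accessible G P i) :
    ¬ Accessible G P j := by
  rcases h.cases_tail with rfl | ⟨k, -, hkj⟩
  exacts [hi, hkj.2.2]

lemma not_accessible_of_mem_strongCompB {i j : Fin r} (hi : ¬ Accessible G P i)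
    (hj : j ∈ strongCompB G P i) : ¬ Accessible G P j :=
  not_accessible_of_reflTransGen_arcInB (mem_filter.1 hj).2.1 hi

lemma zero_notMem_strongCompB {i : Fin r} (hi : ¬ Accessible G P i) :
    0 ∉ strongCompB G P i :=
  fun h => not_accessible_of_mem_strongCompB hi h .refl

lemma reflTransGen_arcInB_of_mem_strongCompB {i j k : Fin r} (hj : j ∈ strongCompB G P i)
    (hk : k ∈ strongCompB G P i) : Relation.ReflTransGen (ArcInB G P) j k :=
  (mem_filter.1 hj).2.2.trans (mem_filter.1 hk).2.1

def OneWayCut (G : SimpleGraph V) (P : Fin r → Finset V) (X : Finset (Fin r)) : Prop :=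
  ∀ p ∈ X, ∀ q ∉ X, Arc G P p q → q ≠ 0 ∧ ¬ Arc G P q p

lemma OneWayCut.biUnion {ι : Type*} {T : Finset ι} {C : ι → Finset (Fin r)}
    (h : ∀ t ∈ T, OneWayCut G P (C t)) : OneWayCut G P (T.biUnion C) := by
  intro p hp q hq
  obtain ⟨t, ht, hpt⟩ := mem_biUnion.1 hp
  exact h t ht p hpt q fun hqt => hq (mem_biUnion.2 ⟨t, ht, hqt⟩)

lemma oneWayCut_strongCompB {i : Fin r} (hi : ¬ Accessible G P i) :
    OneWayCut G P (strongCompB G P i) := by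
  intro p hp q hq hpq
  obtain ⟨-, hip, hpi⟩ := mem_filter.1 hp
  have hpB := not_accessible_of_mem_strongCompB hi hp
  have hqB : ¬ Accessible G P q := fun hqA => hpB (hqA.of_arc hpq)
  refine ⟨fun hq0 => hqB (hq0 ▸ .refl), fun hqp => hq ?_⟩
  exact mem_filter.2 ⟨mem_univ _, hip.tail ⟨hpq, hpB, hqB⟩, hpi.head ⟨hqp, hqB, hpB⟩⟩

end AuxiliaryDigraph

namespace AEColoring

variable [Fintype V] {G : SimpleGraph V} {x : V} {r s : ℕ} [NeZero r] {P : Fin r → Finset V}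

lemma sum_card (hP : AEColoring G x s P) (hs : 1 ≤ s) : ∑ i, #(P i) + 1 = r * s := by
  obtain ⟨-, -, -, hP0, hPi⟩ := hP
  rw [← add_sum_erase _ _ (mem_univ 0), hP0,
    sum_congr rfl fun i hi => hPi i (ne_of_mem_erase hi), sum_const,
    card_erase_of_mem (mem_univ 0), card_univ, Fintype.card_fin, smul_eq_mul]
  obtain ⟨r', rfl⟩ : ∃ r', r = r' + 1 := ⟨r - 1, by have := NeZero.ne r; omega⟩
  obtain ⟨s', rfl⟩ : ∃ s', s = s' + 1 := ⟨s - 1, by omega⟩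
  simp only [Nat.add_sub_cancel]
  ring

lemma le_card_interedges (hP : AEColoring G x s P) {p q : Fin r} (hpq : p ≠ q) (hp : p ≠ 0)
    (h : Arc G P p q → q ≠ 0 ∧ ¬ Arc G P q p) : s ≤ #(G.interedges (P p) (P q)) := by
  obtain ⟨-, -, -, -, hcard⟩ := hP
  by_cases hpq' : Arc G P p q
  · obtain ⟨hq, hqp⟩ := h hpq'
    rw [← hcard q hq, card_interedges_comm]
    exact card_le_card_interedges (forall_exists_adj_of_not_arc hpq.symm hqp)
  · rw [← hcard p hp]
    exact card_le_card_interedges (forall_exists_adj_of_not_arc hpq hpq')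

theorem not_oneWayCut (hP : AEColoring G x s P) (hbip : SemiPlanarBipBound G) (hs : 1 ≤ s)
    (hr : 9 ≤ r) {X : Finset (Fin r)} (h0 : 0 ∉ X) (hX : 3 ≤ #X) (hXc : #X + 3 ≤ r) :
    ¬ OneWayCut G P X := by
  intro hcut
  have hdisj : Disjoint (X.biUnion P) (Xᶜ.biUnion P) := by
    refine (disjoint_biUnion_left _ _ _).2 fun p hp => (disjoint_biUnion_right _ _ _).2 ?_
    exact fun q hq => hP.1 p q fun h => mem_compl.1 hq (h ▸ hp)
  have lower : s * (#X * #Xᶜ) ≤ edgesBetween G (X.biUnion P) (Xᶜ.biUnion P) :=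
    calc s * (#X * #Xᶜ) = ∑ _pq ∈ X ×ˢ Xᶜ, s := by
          rw [sum_const, card_product, smul_eq_mul, mul_comm]
      _ ≤ ∑ pq ∈ X ×ˢ Xᶜ, #(G.interedges (P pq.1) (P pq.2)) := by
        refine sum_le_sum fun pq hpq => ?_
        obtain ⟨hp, hq⟩ := mem_product.1 hpq
        exact hP.le_card_interedges (fun h => mem_compl.1 hq (h ▸ hp)) (fun h => h0 (h ▸ hp))
          (hcut _ hp _ (mem_compl.1 hq))
      _ = #(G.interedges (X.biUnion P) (Xᶜ.biUnion P)) :=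
          (card_interedges_biUnion hP.1 _ _).symm
      _ ≤ _ := card_interedges_le_edgesBetween hdisj
  have upper : edgesBetween G (X.biUnion P) (Xᶜ.biUnion P) + 2 ≤ 2 * (r * s) := by
    have hcard : #(X.biUnion P) + #(Xᶜ.biUnion P) + 1 = r * s := by
      rw [card_biUnion fun p _ q _ h => hP.1 p q h, card_biUnion fun p _ q _ h => hP.1 p q h,
        sum_add_sum_compl, hP.sum_card hs]
    linarith [hbip _ _ hdisj]
  have hXc' : #X + #Xᶜ = r := by rw [card_compl, Fintype.card_fin]; omega
  have hprod : 2 * r ≤ #X * #Xᶜ := by nlinarith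
  nlinarith [Nat.mul_le_mul_left s hprod]

end AEColoring

theorem exists_large_strongCompB [Fintype V] {G : SimpleGraph V} {x : V} {r s : ℕ} [NeZero r]
    {P : Fin r → Finset V} (hP : AEColoring G x s P) (hbip : SemiPlanarBipBound G)
    (hs : 1 ≤ s) (hr : 9 ≤ r) (hA : accCount G P ≤ 2) :
    ∃ i, ¬ Accessible G P i ∧ r - 2 ≤ #(strongCompB G P i) := by
  by_contra! hsmall
  have hcomp (i : Fin r) (hi : ¬ Accessible G P i) : #(strongCompB G P i) ≤ 2 := by
    by_contra! h3
    exact hP.not_oneWayCut hbip hs hr (zero_notMem_strongCompB hi) h3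
      (by have := hsmall i hi; omega) (oneWayCut_strongCompB hi)
  obtain ⟨T, hTB, hT⟩ := exists_subset_card_eq
    (show 3 ≤ #(univ.filter fun i => ¬ Accessible G P i) by
      rw [card_filter_not_accessible]; omega)
  have hTnotAcc (t : Fin r) (ht : t ∈ T) : ¬ Accessible G P t := (mem_filter.1 (hTB ht)).2
  refine hP.not_oneWayCut hbip hs hr (X := T.biUnion (strongCompB G P)) ?_ ?_ ?_
    (OneWayCut.biUnion fun t ht => oneWayCut_strongCompB (hTnotAcc t ht))
  · simp only [mem_biUnion, not_exists, not_and]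
    exact fun t ht => zero_notMem_strongCompB (hTnotAcc t ht)
  · calc 3 = #T := hT.symm
      _ ≤ _ := card_le_card fun t ht => mem_biUnion.2 ⟨t, ht, self_mem_strongCompB t⟩
  · have := card_biUnion_le_card_mul T _ 2 fun t ht => hcomp t (hTnotAcc t ht)
    omega

theorem big_strong_component_semiPlanar_general (V : Type*) [Fintype V] (G : SimpleGraph V)
    (x : V) (r s : ℕ) [NeZero r] (hr : 9 ≤ r) (hs : 1 ≤ s)
    (hbip : SemiPlanarBipBound G)
    (P : Fin r → Finset V) (hP : AEColoring G x s P)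
    (hA : accCount G P ≤ 2) :
    ∃ S : Finset (Fin r), r - 2 ≤ S.card ∧ (∀ i ∈ S, ¬ Accessible G P i) ∧
      ∀ i ∈ S, ∀ j ∈ S,
        Relation.ReflTransGen
          (fun p q => Arc G P p q ∧ ¬ Accessible G P p ∧ ¬ Accessible G P q) i j := by
  obtain ⟨i, hi, hlarge⟩ := exists_large_strongCompB hP hbip hs hr hA
  exact ⟨strongCompB G P i, hlarge, fun j hj => not_accessible_of_mem_strongCompB hi hj,
    fun j hj k hk => reflTransGen_arcInB_of_mem_strongCompB hj hk⟩

/-- **Claim 3.2.** For `r ≥ 9` and a graph satisfying the semi-planar bipartite edge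
bound: if an almost equitable coloring of `G − x` has at most two accessible classes,
then the subdigraph of the auxiliary digraph induced on the non-accessible classes has
a strong component with at least `r − 2` classes. -/
theorem big_strong_component_semiPlanar (V : Type*) [Fintype V] (G : SimpleGraph V)
    (x : V) (r s : ℕ) [NeZero r] (hr : 9 ≤ r) (hs : 1 ≤ s)
    (hcard : Fintype.card V = r * s) (hbip : SemiPlanarBipBound G)
    (P : Fin r → Finset V) (hP : AEColoring G x s P)
    (hA : accCount G P ≤ 2) :
    ∃ S : Finset (Fin r), r - 2 ≤ S.card ∧ (∀ i ∈ S, ¬ Accessible G P i) ∧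
      ∀ i ∈ S, ∀ j ∈ S,
        Relation.ReflTransGen
          (fun p q => Arc G P p q ∧ ¬ Accessible G P p ∧ ¬ Accessible G P q) i j :=
  big_strong_component_semiPlanar_general V G x r s hr hs hbip P hP hA

end Equitable
end

section
/- Setup: let s ≥ 1 be an integer, let G be a finite simple graph on 8s vertices satisfying the planar bipartite edge bound, let x be a vertex of G, and let V_1, …, V_8 be an almost equitable coloring of G − x with small class V_1 and auxiliary digraph H, with at most 4 accessible classes. Then no union of strong components of H consists of exactly 4 classes: there is no set S of classes such that |S| = 4 and S is a union of strong components of H. (This is Claim 4.2(i) of the paper.) -/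
open scoped Classical

namespace Equitable

variable {V : Type*}

private lemma card_le_between_aux {V : Type*} [Fintype V] (G : SimpleGraph V)
    (A B : Finset V) (hdis : Disjoint A B)
    (h : ∀ v ∈ A, ∃ u ∈ B, G.Adj v u) :
    A.card ≤ (G.edgeFinset.filter fun e => ∃ u ∈ A, ∃ w ∈ B, e = s(u, w)).card := by
  classical
  have hex : ∀ v : V, v ∈ A → ∃ u, u ∈ B ∧ G.Adj v u := by
    intro v hv; obtain ⟨u, hu, hadj⟩ := h v hv; exact ⟨u, hu, hadj⟩
  set f : V → Sym2 V := fun v =>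
    if hv : ∃ u, u ∈ B ∧ G.Adj v u then s(v, hv.choose) else s(v, v) with hf
  apply Finset.card_le_card_of_injOn f
  · intro v hv
    have he : ∃ u, u ∈ B ∧ G.Adj v u := hex v hv
    simp only [hf, dif_pos he]
    refine Finset.mem_filter.mpr ⟨?_, v, hv, he.choose, he.choose_spec.1, rfl⟩
    rw [SimpleGraph.mem_edgeFinset]
    exact he.choose_spec.2
  · intro v hv v' hv' heq
    have he : ∃ u, u ∈ B ∧ G.Adj v u := hex v hv
    have he' : ∃ u, u ∈ B ∧ G.Adj v' u := hex v' hv'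
    simp only [hf, dif_pos he, dif_pos he'] at heq
    rcases Sym2.eq_iff.mp heq with ⟨h1, _⟩ | ⟨h1, _⟩
    · exact h1
    · exact absurd (h1 ▸ hv) fun hvA => Finset.disjoint_left.mp hdis hvA (h1 ▸ he'.choose_spec.1)

private lemma between_comm_aux {V : Type*} [Fintype V] (G : SimpleGraph V)
    (A B : Finset V) :
    (G.edgeFinset.filter fun e => ∃ u ∈ A, ∃ w ∈ B, e = s(u, w)) =
    (G.edgeFinset.filter fun e => ∃ u ∈ B, ∃ w ∈ A, e = s(u, w)) := by
  ext e
  simp only [Finset.mem_filter]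
  constructor
  · rintro ⟨he, u, hu, w, hw, rfl⟩
    exact ⟨he, w, hw, u, hu, Sym2.eq_swap⟩
  · rintro ⟨he, u, hu, w, hw, rfl⟩
    exact ⟨he, w, hw, u, hu, Sym2.eq_swap⟩


/-- **Claim 4.2(i).** For a graph on `8s` vertices satisfying the planar bipartite edge
bound: if an almost equitable coloring of `G − x` has at most `4` accessible classes,
then no union of strong components of the auxiliary digraph has exactly `4` classes. -/
theorem no_union_of_four_components (V : Type*) [Fintype V] (G : SimpleGraph V)
    (x : V) (s : ℕ) (hs : 1 ≤ s) (hcard : Fintype.card V = 8 * s)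
    (hbip : PlanarBipBound G)
    (P : Fin 8 → Finset V) (hP : AEColoring G x s P)
    (hA : accCount G P ≤ 4) :
    ¬ ∃ S : Finset (Fin 8), S.card = 4 ∧
      ∀ i ∈ S, ∀ j : Fin 8,
        (Relation.ReflTransGen (Arc G P) i j ∧ Relation.ReflTransGen (Arc G P) j i) →
          j ∈ S := by
  classical
  rintro ⟨S, hS4, hSc⟩
  obtain ⟨hdisj, hcover, hind, h0, hrestc⟩ := hP
  have hT4 : Sᶜ.card = 4 := by
    have h1 : S.card + Sᶜ.card = 8 := by
      rw [Finset.card_add_card_compl]; simp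
    omega
  set E : Fin 8 → Fin 8 → Finset (Sym2 V) := fun i j =>
    G.edgeFinset.filter fun e => ∃ u ∈ P i, ∃ w ∈ P j, e = s(u, w) with hE
  -- per pair lower bound
  have hpair : ∀ p ∈ S ×ˢ Sᶜ,
      s ≤ (E p.1 p.2).card + ((if p.1 = 0 then 1 else 0) + (if p.2 = 0 then 1 else 0)) := by
    rintro ⟨i, j⟩ hp
    obtain ⟨hiS, hjT⟩ := Finset.mem_product.mp hp
    have hjS : j ∉ S := Finset.mem_compl.mp hjT
    have hij : i ≠ j := fun h => hjS (h ▸ hiS)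
    have hnot : ¬ (Arc G P i j ∧ Arc G P j i) := by
      rintro ⟨h1, h2⟩
      exact hjS (hSc i hiS j ⟨Relation.ReflTransGen.single h1,
        Relation.ReflTransGen.single h2⟩)
    have hcase : ¬ Arc G P i j ∨ ¬ Arc G P j i := by tauto
    have hkey : ∀ a b : Fin 8, a ≠ b → ¬ Arc G P a b →
        (P a).card ≤ (E a b).card := by
      intro a b hab hn
      have hall : ∀ v ∈ P a, ∃ u ∈ P b, G.Adj v u := by
        intro v hv
        by_contra hc
        push_neg at hc
        exact hn ⟨hab, v, hv, hc⟩
      exact card_le_between_aux G (P a) (P b) (hdisj a b hab) hall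
    have hcardP : ∀ a : Fin 8, s ≤ (P a).card + (if a = 0 then 1 else 0) := by
      intro a
      by_cases ha : a = 0
      · simp [ha, h0]; omega
      · simp [ha, hrestc a ha]
    rcases hcase with hn | hn
    · have := hkey i j hij hn
      have := hcardP i
      simp only []
      omega
    · have h1 := hkey j i hij.symm hn
      have h2 : E j i = E i j := between_comm_aux G (P j) (P i)
      rw [h2] at h1
      have := hcardP j
      simp only []
      omega
  -- sum of per-pair bounds
  have hsum : 16 * s ≤ (∑ p ∈ S ×ˢ Sᶜ, (E p.1 p.2).card) +
      ((∑ p ∈ S ×ˢ Sᶜ, if p.1 = 0 then 1 else 0) +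
       (∑ p ∈ S ×ˢ Sᶜ, if p.2 = 0 then 1 else 0)) := by
    have hcardST : (S ×ˢ Sᶜ).card = 16 := by
      rw [Finset.card_product, hS4, hT4]
    calc 16 * s = ∑ _p ∈ S ×ˢ Sᶜ, s := by rw [Finset.sum_const, hcardST]; ring
    _ ≤ ∑ p ∈ S ×ˢ Sᶜ, ((E p.1 p.2).card +
          ((if p.1 = 0 then 1 else 0) + (if p.2 = 0 then 1 else 0))) :=
        Finset.sum_le_sum hpair
    _ = _ := by rw [Finset.sum_add_distrib, Finset.sum_add_distrib]
  -- bounding the indicator sums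
  have hA' : (∑ p ∈ S ×ˢ Sᶜ, if p.1 = 0 then (1:ℕ) else 0) ≤ 4 ∧
      (∑ p ∈ S ×ˢ Sᶜ, if p.2 = 0 then (1:ℕ) else 0) ≤ 4 ∧
      ((∑ p ∈ S ×ˢ Sᶜ, if p.1 = 0 then (1:ℕ) else 0) = 0 ∨
       (∑ p ∈ S ×ˢ Sᶜ, if p.2 = 0 then (1:ℕ) else 0) = 0) := by
    have hA1 : (∑ p ∈ S ×ˢ Sᶜ, if p.1 = 0 then (1:ℕ) else 0) =
        if (0 : Fin 8) ∈ S then 4 else 0 := by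
      rw [Finset.sum_product]
      have : ∀ i ∈ S, (∑ _j ∈ Sᶜ, if i = 0 then (1:ℕ) else 0) =
          if i = 0 then 4 else 0 := by
        intro i _
        by_cases h : i = 0 <;> simp [h, hT4]
      rw [Finset.sum_congr rfl this, Finset.sum_ite_eq' S 0 (fun _ => 4)]
    have hA2 : (∑ p ∈ S ×ˢ Sᶜ, if p.2 = 0 then (1:ℕ) else 0) =
        if (0 : Fin 8) ∈ Sᶜ then 4 else 0 := by
      rw [Finset.sum_product]
      have : ∀ i ∈ S, (∑ j ∈ Sᶜ, if j = 0 then (1:ℕ) else 0) =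
          if (0 : Fin 8) ∈ Sᶜ then 1 else 0 := by
        intro i _
        rw [Finset.sum_ite_eq' Sᶜ 0 (fun _ => 1)]
      rw [Finset.sum_congr rfl this, Finset.sum_const, hS4]
      by_cases h : (0 : Fin 8) ∈ Sᶜ <;> simp [h]
    rw [hA1, hA2]
    by_cases h : (0 : Fin 8) ∈ S
    · have : (0 : Fin 8) ∉ Sᶜ := by simp [h]
      simp [h, this]
    · have : (0 : Fin 8) ∈ Sᶜ := by simp [h]
      simp [h, this]
  -- the unions
  set X : Finset V := S.biUnion P with hX
  set Y : Finset V := Sᶜ.biUnion P with hY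
  have hXY : Disjoint X Y := by
    rw [Finset.disjoint_left]
    intro v hv hv'
    obtain ⟨i, hiS, hvi⟩ := Finset.mem_biUnion.mp hv
    obtain ⟨j, hjT, hvj⟩ := Finset.mem_biUnion.mp hv'
    have hij : i ≠ j := fun h => (Finset.mem_compl.mp hjT) (h ▸ hiS)
    exact Finset.disjoint_left.mp (hdisj i j hij) hvi hvj
  -- sum of pair edge counts ≤ edgesBetween X Y
  have hEsub : (∑ p ∈ S ×ˢ Sᶜ, (E p.1 p.2).card) ≤ edgesBetween G X Y := by
    have hdisE : ∀ p ∈ S ×ˢ Sᶜ, ∀ q ∈ S ×ˢ Sᶜ, p ≠ q →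
        Disjoint (E p.1 p.2) (E q.1 q.2) := by
      rintro ⟨i, j⟩ hp ⟨i', j'⟩ hq hne
      obtain ⟨hiS, hjT⟩ := Finset.mem_product.mp hp
      obtain ⟨hiS', hjT'⟩ := Finset.mem_product.mp hq
      rw [Finset.disjoint_left]
      rintro e he he'
      simp only [hE, Finset.mem_filter] at he he'
      obtain ⟨_, u, hu, w, hw, rfl⟩ := he
      obtain ⟨_, u', hu', w', hw', heq⟩ := he'
      rcases Sym2.eq_iff.mp heq.symm with ⟨h1, h2⟩ | ⟨h1, h2⟩
      · subst h1; subst h2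
        have hii : i = i' := by
          by_contra hc
          exact Finset.disjoint_left.mp (hdisj i i' hc) hu hu'
        have hjj : j = j' := by
          by_contra hc
          exact Finset.disjoint_left.mp (hdisj j j' hc) hw hw'
        exact hne (by rw [hii, hjj])
      · subst h1; subst h2
        have hij' : i ≠ j' := fun h => (Finset.mem_compl.mp hjT') (h ▸ hiS)
        exact Finset.disjoint_left.mp (hdisj i j' hij') hu hw'
    rw [← Finset.card_biUnion hdisE]
    unfold edgesBetween
    apply Finset.card_le_card
    intro e he
    obtain ⟨p, hp, hep⟩ := Finset.mem_biUnion.mp he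
    obtain ⟨hiS, hjT⟩ := Finset.mem_product.mp hp
    simp only [hE, Finset.mem_filter] at hep
    obtain ⟨heG, u, hu, w, hw, rfl⟩ := hep
    exact Finset.mem_filter.mpr ⟨heG, u, Finset.mem_biUnion.mpr ⟨p.1, hiS, hu⟩,
      w, Finset.mem_biUnion.mpr ⟨p.2, hjT, hw⟩, rfl⟩
  -- cardinalities
  have hXc : X.card = ∑ i ∈ S, (P i).card :=
    Finset.card_biUnion fun i _ j _ hne => hdisj i j hne
  have hYc : Y.card = ∑ i ∈ Sᶜ, (P i).card :=
    Finset.card_biUnion fun i _ j _ hne => hdisj i j hne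
  have htot : X.card + Y.card + 1 = 8 * s := by
    rw [hXc, hYc, Finset.sum_add_sum_compl]
    have : ∑ i : Fin 8, (P i).card =
        (P 0).card + ((P 1).card + ((P 2).card + ((P 3).card +
        ((P 4).card + ((P 5).card + ((P 6).card + (P 7).card)))))) := by
      simp [Fin.sum_univ_eight]; ring
    rw [this, h0, hrestc 1 (by decide), hrestc 2 (by decide), hrestc 3 (by decide),
      hrestc 4 (by decide), hrestc 5 (by decide), hrestc 6 (by decide),
      hrestc 7 (by decide)]
    omega
  have hupper : edgesBetween G X Y ≤ 2 * (X.card + Y.card) - 4 :=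
    hbip X Y hXY (by omega)
  omega

end Equitable
end

section
/- Setup: let r ≥ 2 and s ≥ 1 be integers, let G be a finite simple graph on rs vertices with a distinguished vertex x, and let V_1, …, V_r be an almost equitable coloring of G − x with small class V_1, auxiliary digraph H, accessible classes A and non-accessible classes B, chosen so that no almost equitable coloring of G − x has more accessible classes. Let V_i be a terminal accessible class, let v ∈ V_i be an ordinary vertex, and let u ∈ Q'(v) lie in the class W_j ∈ B. Then the number of neighbors of v in W_j is not exactly 1 (equivalently, since u ∈ W_j is a neighbor of v, v has at least two neighbors in W_j). (This is Lemma 2.3(a) of the paper.) -/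
open scoped Classical

namespace Equitable

variable {V : Type*}

/-! If `v` had `u` as its only neighbour in `P j`, exchanging `u` and `v` would give another
almost equitable coloring. Since `P i` is terminal, every other accessible class keeps its path
to the small class, and the second solo neighbour `u'`, which is non-adjacent to `u`, now
witnesses an arc from its non-accessible class into `P i`. So as soon as `P i` itself is still
accessible after the exchange, there are more accessible classes than before. Ordinarity of `v`
makes `P i` accessible, except when `P 0, P i` are the only accessible classes and `v` is the only
vertex of `P i` movable to `P 0`; then moving `v` into the small class instead makes `P 0, P j`
and the class of `u'` accessible. -/

section Independent

variable {G : SimpleGraph V}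

lemma indep_insert {T : Finset V} {w : V} (hT : ∀ a ∈ T, ∀ b ∈ T, ¬G.Adj a b)
    (hw : ∀ b ∈ T, ¬G.Adj w b) : ∀ a ∈ insert w T, ∀ b ∈ insert w T, ¬G.Adj a b := by
  simp only [Finset.mem_insert]
  rintro a (rfl | ha) b (rfl | hb)
  · exact G.irrefl
  · exact hw b hb
  · exact fun h => hw a ha h.symm
  · exact hT a ha b hb

lemma indep_insert_erase {S : Finset V} {u v : V} (hS : ∀ a ∈ S, ∀ b ∈ S, ¬G.Adj a b)
    (hu : ∀ b ∈ S, G.Adj u b → b = v) :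
    ∀ a ∈ insert u (S.erase v), ∀ b ∈ insert u (S.erase v), ¬G.Adj a b :=
  indep_insert
    (fun a ha b hb => hS a (Finset.mem_of_mem_erase ha) b (Finset.mem_of_mem_erase hb))
    fun b hb h => Finset.ne_of_mem_erase hb (hu b (Finset.mem_of_mem_erase hb) h)

end Independent

lemma map_swap_of_notMem {S : Finset V} {u v : V} (hu : u ∉ S) (hv : v ∉ S) :
    S.map (Equiv.swap u v).toEmbedding = S := by
  ext a
  rw [Finset.mem_map_equiv, Equiv.symm_swap, Equiv.swap_apply_def]
  split_ifs with hau hav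
  · subst hau; simp [hu, hv]
  · subst hav; simp [hu, hv]
  · rfl

lemma map_swap_of_mem_of_notMem {S : Finset V} {u v : V} (hv : v ∈ S) (hu : u ∉ S) :
    S.map (Equiv.swap u v).toEmbedding = insert u (S.erase v) := by
  have huv : u ≠ v := fun h => hu (h ▸ hv)
  ext a
  rw [Finset.mem_map_equiv, Equiv.symm_swap, Equiv.swap_apply_def]
  split_ifs with hau hav
  · simp [hau, hv]
  · simp [hav, hu, huv.symm]
  · simp [hau, hav]

section Recoloring

variable {G : SimpleGraph V} {r : ℕ}

noncomputable def swapVertices (P : Fin r → Finset V) (u v : V) : Fin r → Finset V :=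
  fun m => (P m).map (Equiv.swap u v).toEmbedding

noncomputable def moveToSmall [NeZero r] (P : Fin r → Finset V) (a : Fin r) (w : V) :
    Fin r → Finset V :=
  fun m => if m = 0 then (P a).erase w else if m = a then insert w (P 0) else P m

variable {P P' : Fin r → Finset V} {i k m p q : Fin r}

lemma Arc.congr (h : Arc G P p q) (hp : P' p = P p) (hq : P' q = P q) : Arc G P' p q := by
  unfold Arc
  rwa [hp, hq]

variable [NeZero r]

lemma accessible_zero : Accessible G P 0 :=
  Relation.ReflTransGen.refl

lemma ne_of_not_accessible (hm : ¬Accessible G P m) (hi : Accessible G P i) : m ≠ i :=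
  fun h => hm (h ▸ hi)

lemma Terminal.accessible_of_eqOn (hterm : Terminal G P i)
    (hPP' : ∀ p, Accessible G P p → p ≠ i → P' p = P p) (hm : Accessible G P m)
    (hmi : m ≠ i) : Accessible G P' m := by
  have hpath : Relation.ReflTransGen (fun p q => Arc G P p q ∧ p ≠ i ∧ q ≠ i) m 0 :=
    of_not_not fun h => hterm.2 m hm ⟨Ne.symm hmi, h⟩
  induction hpath using Relation.ReflTransGen.head_induction_on with
  | refl => exact accessible_zero
  | head hpq hq ih =>
    have hqacc : Accessible G P _ := Relation.ReflTransGen.mono (fun _ _ h => h.1) _ _ hq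
    exact .head (hpq.1.congr (hPP' _ hm hmi) (hPP' _ hqacc hpq.2.2)) (ih hqacc hpq.2.2)

lemma accCount_lt_accCount (h : ∀ m, Accessible G P m → Accessible G P' m)
    (hk : ¬Accessible G P k) (hk' : Accessible G P' k) : accCount G P < accCount G P' := by
  refine Finset.card_lt_card ⟨fun m hm => ?_, fun hsub => hk ?_⟩
  · simp only [Finset.mem_filter, Finset.mem_univ, true_and] at hm ⊢
    exact h m hm
  · simpa using hsub (by simpa using hk')

lemma Terminal.accCount_lt_of_accessible (hterm : Terminal G P i)
    (hPP' : ∀ p, Accessible G P p → p ≠ i → P' p = P p) (hi : Accessible G P' i)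
    (hk : ¬Accessible G P k) (hki : Arc G P' k i) : accCount G P < accCount G P' := by
  refine accCount_lt_accCount (fun m hm => ?_) hk (.head hki hi)
  by_cases hmi : m = i
  · exact hmi ▸ hi
  · exact hterm.accessible_of_eqOn hPP' hm hmi

lemma three_le_accCount {a b c : Fin r} (hab : a ≠ b) (hac : a ≠ c) (hbc : b ≠ c)
    (ha : Accessible G P a) (hb : Accessible G P b) (hc : Accessible G P c) :
    3 ≤ accCount G P :=
  calc 3 = ({a, b, c} : Finset (Fin r)).card :=
        (Finset.card_eq_three.2 ⟨a, b, c, hab, hac, hbc, rfl⟩).symm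
    _ ≤ accCount G P := Finset.card_le_card fun m hm => by
        simp only [Finset.mem_insert, Finset.mem_singleton] at hm
        simp only [Finset.mem_filter, Finset.mem_univ, true_and]
        rcases hm with rfl | rfl | rfl <;> assumption

lemma arc_moveToSmall {a c : Fin r} {w y : V} (hc0 : c ≠ 0) (hca : c ≠ a) (hy : y ∈ P c)
    (hsolo : ∀ z ∈ P a, G.Adj y z → z = w) : Arc G (moveToSmall P a w) c 0 := by
  refine ⟨hc0, y, by simpa [moveToSmall, hc0, hca] using hy, fun z hz hyz => ?_⟩
  simp only [moveToSmall, if_pos] at hz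
  exact Finset.ne_of_mem_erase hz (hsolo z (Finset.mem_of_mem_erase hz) hyz)

lemma three_le_accCount_moveToSmall {a b c : Fin r} {w y z : V} (hb0 : b ≠ 0) (hba : b ≠ a)
    (hc0 : c ≠ 0) (hca : c ≠ a) (hbc : b ≠ c) (hy : y ∈ P b) (hz : z ∈ P c)
    (hy' : ∀ t ∈ P a, G.Adj y t → t = w) (hz' : ∀ t ∈ P a, G.Adj z t → t = w) :
    3 ≤ accCount G (moveToSmall P a w) :=
  three_le_accCount hb0.symm hc0.symm hbc accessible_zero
    (.single (arc_moveToSmall hb0 hba hy hy')) (.single (arc_moveToSmall hc0 hca hz hz'))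

lemma arc_zero_of_accCount_le_two (hA : accCount G P ≤ 2) (hi : Accessible G P i)
    (hi0 : i ≠ 0) : Arc G P i 0 := by
  obtain h | ⟨q, hiq, hq⟩ := hi.cases_head
  · exact absurd h hi0
  obtain rfl : q = 0 := by
    by_contra hq0
    have := three_le_accCount (Ne.symm hi0) (Ne.symm hq0) hiq.1 accessible_zero hi hq
    omega
  exact hiq

end Recoloring

section Coloring

variable [Fintype V] {G : SimpleGraph V} {x : V} {r s : ℕ} [NeZero r] {P : Fin r → Finset V}

lemma AEColoring.notMem_of_ne (hP : AEColoring G x s P) {i j : Fin r} {u : V} (hu : u ∈ P j)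
    (hij : i ≠ j) : u ∉ P i :=
  Finset.disjoint_right.1 (hP.1 i j hij) hu

lemma AEColoring.ne_of_mem (hP : AEColoring G x s P) {i : Fin r} {u : V} (hu : u ∈ P i) :
    u ≠ x :=
  (hP.2.1 u).1 ⟨i, hu⟩

lemma AEColoring.map_perm (hP : AEColoring G x s P) (σ : Equiv.Perm V) (hσx : σ x = x)
    (hind : ∀ m, ∀ a ∈ (P m).map σ.toEmbedding, ∀ b ∈ (P m).map σ.toEmbedding,
      ¬G.Adj a b) :
    AEColoring G x s fun m => (P m).map σ.toEmbedding := by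
  obtain ⟨hdisj, hcov, -, hc0, hcs⟩ := hP
  refine ⟨fun m n hmn => (Finset.disjoint_map _).2 (hdisj m n hmn), fun w => ?_, hind,
    by simpa using hc0, fun m hm => by simpa using hcs m hm⟩
  simp only [Finset.mem_map_equiv]
  rw [hcov, ne_eq, ne_eq, Equiv.symm_apply_eq, hσx]

lemma AEColoring.swapVertices_of_ne (hP : AEColoring G x s P) {i j m : Fin r} {u v : V}
    (hv : v ∈ P i) (hu : u ∈ P j) (hmi : m ≠ i) (hmj : m ≠ j) :
    swapVertices P u v m = P m :=
  map_swap_of_notMem (hP.notMem_of_ne hu hmj) (hP.notMem_of_ne hv hmi)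

lemma AEColoring.swapVertices_left (hP : AEColoring G x s P) {i j : Fin r} (hij : i ≠ j)
    {u v : V} (hv : v ∈ P i) (hu : u ∈ P j) :
    swapVertices P u v i = insert u ((P i).erase v) :=
  map_swap_of_mem_of_notMem hv (hP.notMem_of_ne hu hij)

lemma AEColoring.arc_swapVertices_from_left (hP : AEColoring G x s P) {i j m : Fin r}
    (hij : i ≠ j) {u v w : V} (hv : v ∈ P i) (hu : u ∈ P j) (hmi : m ≠ i) (hmj : m ≠ j)
    (hw : w ∈ P i) (hwv : w ≠ v) (hwm : ∀ z ∈ P m, ¬G.Adj w z) :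
    Arc G (swapVertices P u v) i m :=
  ⟨hmi.symm, w, by simp [hP.swapVertices_left hij hv hu, hw, hwv],
    by rwa [hP.swapVertices_of_ne hv hu hmi hmj]⟩

lemma AEColoring.arc_swapVertices_to_left (hP : AEColoring G x s P) {i j k : Fin r}
    (hij : i ≠ j) {u v y : V} (hv : v ∈ P i) (hu : u ∈ P j) (hki : k ≠ i) (hkj : k ≠ j)
    (hy : y ∈ P k) (hyu : ¬G.Adj y u) (hsolo : ∀ z ∈ P i, G.Adj y z → z = v) :
    Arc G (swapVertices P u v) k i := by
  refine ⟨hki, y, by rwa [hP.swapVertices_of_ne hv hu hki hkj], fun z hz => ?_⟩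
  rw [hP.swapVertices_left hij hv hu, Finset.mem_insert] at hz
  rcases hz with rfl | hz
  · exact hyu
  · exact fun h => Finset.ne_of_mem_erase hz (hsolo z (Finset.mem_of_mem_erase hz) h)

lemma aeColoring_swapVertices (hP : AEColoring G x s P) {i j : Fin r} (hij : i ≠ j) {u v : V}
    (hv : v ∈ P i) (hu : u ∈ P j) (hsolo : ∀ w ∈ P i, G.Adj u w → w = v)
    (hvj : ∀ w ∈ P j, G.Adj v w → w = u) : AEColoring G x s (swapVertices P u v) := by
  refine hP.map_perm _ (Equiv.swap_apply_of_ne_of_ne (hP.ne_of_mem hu).symm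
    (hP.ne_of_mem hv).symm) fun m => ?_
  change ∀ a ∈ swapVertices P u v m, ∀ b ∈ swapVertices P u v m, ¬G.Adj a b
  by_cases hmi : m = i
  · subst hmi
    rw [hP.swapVertices_left hij hv hu]
    exact indep_insert_erase (hP.2.2.1 m) hsolo
  by_cases hmj : m = j
  · subst hmj
    rw [swapVertices, Equiv.swap_comm,
      map_swap_of_mem_of_notMem hu (hP.notMem_of_ne hv hij.symm)]
    exact indep_insert_erase (hP.2.2.1 m) hvj
  rw [hP.swapVertices_of_ne hv hu hmi hmj]
  exact hP.2.2.1 m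

lemma AEColoring.mem_moveToSmall (hP : AEColoring G x s P) {a m : Fin r} {w z : V}
    (ha : a ≠ 0) (hw : w ∈ P a) :
    z ∈ moveToSmall P a w m ↔ z = w ∧ m = a ∨ z ≠ w ∧ z ∈ P (Equiv.swap 0 a m) := by
  unfold moveToSmall
  split_ifs with hm0 hma
  · subst hm0
    simp [ha.symm]
  · subst hma
    simp only [Finset.mem_insert, Equiv.swap_apply_right, and_true]
    tauto
  · rw [Equiv.swap_apply_of_ne_of_ne hm0 hma]
    have hwm := hP.notMem_of_ne hw hma
    constructor
    · exact fun hz => .inr ⟨fun h => hwm (h ▸ hz), hz⟩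
    · rintro (⟨-, rfl⟩ | ⟨-, hz⟩)
      · exact absurd rfl hma
      · exact hz

lemma aeColoring_moveToSmall (hP : AEColoring G x s P) {a : Fin r} {w : V} (ha : a ≠ 0)
    (hw : w ∈ P a) (hw0 : ∀ z ∈ P 0, ¬G.Adj w z) : AEColoring G x s (moveToSmall P a w) := by
  refine ⟨fun m n hmn => Finset.disjoint_left.2 fun z hzm hzn => ?_, fun z => ?_, fun m => ?_,
    ?_, fun m hm => ?_⟩
  · rw [hP.mem_moveToSmall ha hw] at hzm hzn
    rcases hzm with ⟨rfl, rfl⟩ | ⟨hzw, hzm⟩ <;>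
      rcases hzn with ⟨hzw', rfl⟩ | ⟨hzw', hzn⟩
    · exact hmn rfl
    · exact hzw' rfl
    · exact hzw hzw'
    · exact Finset.disjoint_left.1 (hP.1 _ _ ((Equiv.swap 0 a).injective.ne hmn)) hzm hzn
  · simp only [hP.mem_moveToSmall ha hw]
    constructor
    · rintro ⟨m, ⟨rfl, -⟩ | ⟨-, hz⟩⟩
      · exact hP.ne_of_mem hw
      · exact hP.ne_of_mem hz
    · intro hzx
      by_cases hzw : z = w
      · exact ⟨a, .inl ⟨hzw, rfl⟩⟩
      obtain ⟨m, hm⟩ := (hP.2.1 z).2 hzx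
      exact ⟨Equiv.swap 0 a m, .inr ⟨hzw, by rwa [Equiv.swap_apply_self]⟩⟩
  · unfold moveToSmall
    split_ifs
    · exact fun b hb c hc =>
        hP.2.2.1 a b (Finset.mem_of_mem_erase hb) c (Finset.mem_of_mem_erase hc)
    · exact indep_insert (hP.2.2.1 0) hw0
    · exact hP.2.2.1 m
  · simp [moveToSmall, Finset.card_erase_of_mem hw, hP.2.2.2.2 a ha]
  · have hs : 1 ≤ s := hP.2.2.2.2 a ha ▸ Finset.card_pos.2 ⟨w, hw⟩
    unfold moveToSmall
    rw [if_neg hm]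
    split_ifs
    · rw [Finset.card_insert_of_notMem (hP.notMem_of_ne hw ha.symm), hP.2.2.2.1]
      omega
    · exact hP.2.2.2.2 m hm

end Coloring

theorem solo_class_not_single_neighbor_general (V : Type*) [Fintype V] (G : SimpleGraph V)
    (x : V) (r s : ℕ) [NeZero r]
    (P : Fin r → Finset V) (hP : AEColoring G x s P)
    (hmax : MaxAccessible G x s P)
    (i : Fin r) (hterm : Terminal G P i)
    (v : V) (hv : v ∈ P i) (hord : Ordinary G P i v)
    (u : V) (j : Fin r) (hu : u ∈ P j) (hjB : ¬ Accessible G P j)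
    (huQ' : InQ' G P i v u) :
    ((P j).filter fun w => G.Adj v w).card ≠ 1 := by
  obtain ⟨⟨-, hvu, hsolo⟩, u', ⟨⟨k, hkB, hu'k⟩, hvu', hsolo'⟩, hu'u, hnadj⟩ := huQ'
  intro hone
  have hvj : ∀ w ∈ P j, G.Adj v w → w = u := fun w hw hvw =>
    Finset.card_le_one.1 hone.le w (by simp [hw, hvw]) u (by simp [hu, hvu])
  have hji := ne_of_not_accessible hjB hterm.1
  have hj0 := ne_of_not_accessible hjB accessible_zero
  have hki := ne_of_not_accessible hkB hterm.1
  have hk0 := ne_of_not_accessible hkB accessible_zero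
  have hkj : k ≠ j := fun h => hu'u (hvj u' (h ▸ hu'k) hvu')
  have hagree : ∀ p, Accessible G P p → p ≠ i → swapVertices P u v p = P p :=
    fun p hp hpi => hP.swapVertices_of_ne hv hu hpi (ne_of_not_accessible hjB hp).symm
  have hi' : ¬Accessible G (swapVertices P u v) i := fun hi =>
    (hmax _ (aeColoring_swapVertices hP hji.symm hv hu hsolo hvj)).not_gt <|
      hterm.accCount_lt_of_accessible hagree hi hkB
        (hP.arc_swapVertices_to_left hji.symm hv hu hki hkj hu'k (hnadj ·.symm) hsolo')
  rcases hord with ⟨v', hv'i, hv'v, m, hmi, hm, hv'm⟩ | hA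
  · exact hi' (.head
      (hP.arc_swapVertices_from_left hji.symm hv hu hmi (ne_of_not_accessible hjB hm).symm
        hv'i hv'v hv'm)
      (hterm.accessible_of_eqOn hagree hm hmi))
  by_cases hi0 : i = 0
  · exact hi' (hi0 ▸ accessible_zero)
  obtain ⟨-, w, hw, hw0⟩ := arc_zero_of_accCount_le_two hA hterm.1 hi0
  by_cases hwv : w = v
  · subst hwv
    have := hmax _ (aeColoring_moveToSmall hP hi0 hw hw0)
    have := three_le_accCount_moveToSmall hj0 hji hk0 hki hkj.symm hu hu'k hsolo hsolo'
    omega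
  · exact hi' (.single
      (hP.arc_swapVertices_from_left hji.symm hv hu (Ne.symm hi0) hj0.symm hw hwv hw0))

/-- **Lemma 2.3(a).** Let `P` be an almost equitable coloring of `G − x` maximizing the
number of accessible classes, let `v` be an ordinary vertex of a terminal accessible
class `P i`, and let `u ∈ Q'(v)` lie in the non-accessible class `P j`.  Then `v` does
not have exactly one neighbor in `P j`. -/
theorem solo_class_not_single_neighbor (V : Type*) [Fintype V] (G : SimpleGraph V)
    (x : V) (r s : ℕ) [NeZero r] (hr : 2 ≤ r) (hs : 1 ≤ s)
    (hcard : Fintype.card V = r * s)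
    (P : Fin r → Finset V) (hP : AEColoring G x s P)
    (hmax : MaxAccessible G x s P)
    (i : Fin r) (hterm : Terminal G P i)
    (v : V) (hv : v ∈ P i) (hord : Ordinary G P i v)
    (u : V) (j : Fin r) (hu : u ∈ P j) (hjB : ¬ Accessible G P j)
    (huQ' : InQ' G P i v u) :
    ((P j).filter fun w => G.Adj v w).card ≠ 1 :=
  solo_class_not_single_neighbor_general V G x r s P hP hmax i hterm v hv hord u j hu hjB huQ'

end Equitable
end

section
/- Setup: let r ≥ 3 and s ≥ 1 be integers, let G be a finite simple graph on rs vertices with a distinguished vertex x, and let V_1, …, V_r be an almost equitable coloring of G − x with small class V_1, auxiliary digraph H, accessible classes A and non-accessible classes B, chosen so that no almost equitable coloring of G − x has more accessible classes. Suppose there are exactly 2 accessible classes, A = {V_1, V_2}. If a vertex v ∈ V_2 has a solo neighbor in some class of B, then v has a neighbor in V_1. (This is claim (8) in Case 1 of the proof of Theorem 1.3.) -/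
open scoped Classical

namespace Equitable

variable {V : Type*}

/-- **Claim (8) (Case 1 of the proof of Theorem 1.3).** Let `P` be an almost equitable
coloring of `G − x` maximizing the number of accessible classes, with exactly two
accessible classes `P 0` (small) and `P c`.  If a vertex `v ∈ P c` has a solo neighbor
in some non-accessible class, then `v` has a neighbor in `P 0`. -/
theorem solo_vertex_has_neighbor_in_small_class (V : Type*) [Fintype V]
    (G : SimpleGraph V) (x : V) (r s : ℕ) [NeZero r] (hr : 3 ≤ r) (hs : 1 ≤ s)
    (hcard : Fintype.card V = r * s)
    (P : Fin r → Finset V) (hP : AEColoring G x s P)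
    (hmax : MaxAccessible G x s P)
    (c : Fin r) (hc : c ≠ 0)
    (hacc : ∀ k : Fin r, Accessible G P k ↔ (k = 0 ∨ k = c))
    (v : V) (hv : v ∈ P c)
    (hsolo : ∃ u : V, SoloNbr G P c v u) :
    ∃ w ∈ P 0, G.Adj v w := by
  by_contra hcon
  push_neg at hcon
  obtain ⟨u, ⟨k, hknacc, huk⟩, hadj, huniq⟩ := hsolo
  have hk0 : k ≠ 0 := fun h => hknacc (h ▸ Relation.ReflTransGen.refl)
  have hkc : k ≠ c := fun h => hknacc ((hacc k).mpr (Or.inr h))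
  obtain ⟨hdisj, hcover, hindep, hsmall, hbig⟩ := hP
  have hvP0 : v ∉ P 0 := fun h => Finset.disjoint_left.mp (hdisj 0 c (Ne.symm hc)) h hv
  set P' : Fin r → Finset V := fun i =>
    if i = 0 then (P c).erase v else if i = c then insert v (P 0) else P i with hP'def
  have hP'0 : P' 0 = (P c).erase v := by simp [hP'def]
  have hP'c : P' c = insert v (P 0) := by simp [hP'def, hc]
  have hP'other : ∀ i : Fin r, i ≠ 0 → i ≠ c → P' i = P i := by
    intro i h1 h2; simp [hP'def, h1, h2]
  have hmem : ∀ (w : V) (i : Fin r), w ∈ P' i ↔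
      (i = 0 ∧ w ∈ P c ∧ w ≠ v) ∨ (i = c ∧ (w = v ∨ w ∈ P 0)) ∨
      (i ≠ 0 ∧ i ≠ c ∧ w ∈ P i) := by
    intro w i
    by_cases h1 : i = 0
    · subst h1
      simp [hP'0, Finset.mem_erase, Ne.symm hc, and_comm]
    · by_cases h2 : i = c
      · subst h2
        simp [hP'c, Finset.mem_insert, h1]
      · simp [hP'other i h1 h2, h1, h2]
  -- P' is an almost equitable coloring
  have hP'AE : AEColoring G x s P' := by
    refine ⟨?_, ?_, ?_, ?_, ?_⟩
    · -- pairwise disjoint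
      intro i j hij
      rw [Finset.disjoint_left]
      intro a hai haj
      rw [hmem] at hai haj
      rcases hai with ⟨hi, ha1, ha2⟩ | ⟨hi, ha⟩ | ⟨hi1, hi2, ha⟩
      · rcases haj with ⟨hj, _, _⟩ | ⟨hj, hb⟩ | ⟨hj1, hj2, hb⟩
        · exact hij (hi.trans hj.symm)
        · rcases hb with rfl | hb
          · exact ha2 rfl
          · exact Finset.disjoint_left.mp (hdisj c 0 hc) ha1 hb
        · exact Finset.disjoint_left.mp (hdisj c j (Ne.symm hj2)) ha1 hb
      · rcases haj with ⟨hj, hb1, hb2⟩ | ⟨hj, hb⟩ | ⟨hj1, hj2, hb⟩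
        · rcases ha with rfl | ha
          · exact hb2 rfl
          · exact Finset.disjoint_left.mp (hdisj 0 c (Ne.symm hc)) ha hb1
        · exact hij (hi.trans hj.symm)
        · rcases ha with rfl | ha
          · exact Finset.disjoint_left.mp (hdisj c j (Ne.symm hj2)) hv hb
          · exact Finset.disjoint_left.mp (hdisj 0 j (Ne.symm hj1)) ha hb
      · rcases haj with ⟨hj, hb1, _⟩ | ⟨hj, hb⟩ | ⟨hj1, hj2, hb⟩
        · exact Finset.disjoint_left.mp (hdisj i c hi2) ha hb1
        · rcases hb with rfl | hb
          · exact Finset.disjoint_left.mp (hdisj i c hi2) ha hv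
          · exact Finset.disjoint_left.mp (hdisj i 0 hi1) ha hb
        · exact Finset.disjoint_left.mp (hdisj i j hij) ha hb
    · -- coverage
      intro w
      constructor
      · rintro ⟨i, hi⟩
        rw [hmem] at hi
        rcases hi with ⟨_, ha, _⟩ | ⟨_, ha⟩ | ⟨_, _, ha⟩
        · exact (hcover w).mp ⟨c, ha⟩
        · rcases ha with rfl | ha
          · exact (hcover w).mp ⟨c, hv⟩
          · exact (hcover w).mp ⟨0, ha⟩
        · exact (hcover w).mp ⟨_, ha⟩
      · intro hw
        obtain ⟨i, hi⟩ := (hcover w).mpr hw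
        by_cases h1 : i = 0
        · subst h1
          exact ⟨c, by rw [hmem]; exact Or.inr (Or.inl ⟨rfl, Or.inr hi⟩)⟩
        · by_cases h2 : i = c
          · by_cases hwv : w = v
            · exact ⟨c, by rw [hmem]; exact Or.inr (Or.inl ⟨rfl, Or.inl hwv⟩)⟩
            · exact ⟨0, by rw [hmem]; exact Or.inl ⟨rfl, h2 ▸ hi, hwv⟩⟩
          · exact ⟨i, by rw [hmem]; exact Or.inr (Or.inr ⟨h1, h2, hi⟩)⟩
    · -- independence
      intro i a ha b hb
      rw [hmem] at ha hb
      rcases ha with ⟨hi, ha1, _⟩ | ⟨hi, ha⟩ | ⟨hi1, hi2, ha⟩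
      · rcases hb with ⟨_, hb1, _⟩ | ⟨hj, _⟩ | ⟨hj1, _, _⟩
        · exact hindep c a ha1 b hb1
        · exact absurd (hi.symm.trans hj) (Ne.symm hc)
        · exact absurd hi (by exact fun h => hj1 h)
      · rcases hb with ⟨hj, _, _⟩ | ⟨_, hb⟩ | ⟨_, hj2, _⟩
        · exact absurd (hj.symm.trans hi) (Ne.symm hc)
        · rcases ha with rfl | ha
          · rcases hb with rfl | hb
            · exact G.irrefl
            · exact hcon b hb
          · rcases hb with rfl | hb
            · intro h; exact hcon a ha h.symm
            · exact hindep 0 a ha b hb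
        · exact absurd hi (fun h => hj2 h)
      · rcases hb with ⟨hj, _, _⟩ | ⟨hj, _⟩ | ⟨_, _, hb⟩
        · exact absurd hj hi1
        · exact absurd hj hi2
        · exact hindep i a ha b hb
    · -- small class size
      rw [hP'0, Finset.card_erase_of_mem hv, hbig c hc]
    · -- big class sizes
      intro i hi
      by_cases h2 : i = c
      · subst h2
        rw [hP'c, Finset.card_insert_of_notMem hvP0, hsmall]
        omega
      · rw [hP'other i hi h2]
        exact hbig i hi
  -- accCount G P = 2
  have hfilter : (Finset.univ.filter fun i => Accessible G P i) = {0, c} := by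
    ext i
    simp only [Finset.mem_filter, Finset.mem_univ, true_and, Finset.mem_insert,
      Finset.mem_singleton]
    exact hacc i
  have haccP : accCount G P = 2 := by
    rw [accCount, hfilter]
    exact Finset.card_pair (Ne.symm hc)
  -- three accessible classes in P'
  have hacc0' : Accessible G P' 0 := Relation.ReflTransGen.refl
  have haccc' : Accessible G P' c := by
    refine Relation.ReflTransGen.single ⟨hc, v, ?_, ?_⟩
    · rw [hP'c]; exact Finset.mem_insert_self v _
    · intro w hw
      rw [hP'0] at hw
      exact hindep c v hv w (Finset.mem_of_mem_erase hw)
  have hacck' : Accessible G P' k := by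
    refine Relation.ReflTransGen.single ⟨hk0, u, ?_, ?_⟩
    · rw [hP'other k hk0 hkc]; exact huk
    · intro w hw hadjw
      rw [hP'0, Finset.mem_erase] at hw
      exact hw.1 (huniq w hw.2 hadjw)
  have hsub : ({0, c, k} : Finset (Fin r)) ⊆
      Finset.univ.filter fun i => Accessible G P' i := by
    intro i hi
    simp only [Finset.mem_insert, Finset.mem_singleton] at hi
    rcases hi with rfl | rfl | rfl <;>
      simp [Finset.mem_filter, hacc0', haccc', hacck']
  have hcard3 : ({0, c, k} : Finset (Fin r)).card = 3 := by
    rw [Finset.card_insert_of_notMem (by simp [Ne.symm hc, Ne.symm hk0]),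
      Finset.card_pair hkc.symm]
  have h3 : 3 ≤ accCount G P' := by
    rw [accCount, ← hcard3]
    exact Finset.card_le_card hsub
  have := hmax P' hP'AE
  omega


end Equitable
end
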